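/- arXiv:1601.00690 — 7 statements merged into one kernel-verified Lean document; each statement's English description precedes it below -/
import Mathlib

section
/- Let u, κ : [-τ, τ] → ℝ with κ Lipschitz and positive, and suppose u solves the Riccati equation u' + u² = κ² with initial condition u(-τ) = 0. If κ is Q-controlled for some Q ≥ 2, meaning its right-derivative satisfies D⁺κ ≥ ((1 - Q²)/Q)·κ², then u(t) ≤ Q·κ(t) for all t ∈ [-τ, τ]. -/
open Set

/-- Riccati comparison: if `κ` is `Q`-controlled (its right-derivative satisfies
`D⁺κ ≥ ((1-Q²)/Q)·κ²`) and `u` solves `u' + u² = κ²` on `[-τ,τ]` with `u(-τ) = 0`,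
then `u ≤ Q·κ` on `[-τ,τ]`. -/
theorem stmt_0 (τ Q : ℝ) (hτ : 0 < τ) (hQ : 2 ≤ Q)
    (κ u Dκ : ℝ → ℝ) (L : NNReal)
    (hκpos : ∀ t ∈ Icc (-τ) τ, 0 < κ t)
    (hκlip : LipschitzOnWith L κ (Icc (-τ) τ))
    (hκderiv : ∀ t ∈ Icc (-τ) τ, HasDerivWithinAt κ (Dκ t) (Ici t) t)
    (hQctrl : ∀ t ∈ Icc (-τ) τ, ((1 - Q ^ 2) / Q) * (κ t) ^ 2 ≤ Dκ t)
    (hu : ∀ t ∈ Icc (-τ) τ, HasDerivAt u ((κ t) ^ 2 - (u t) ^ 2) t)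
    (hu0 : u (-τ) = 0) :
    ∀ t ∈ Icc (-τ) τ, u t ≤ Q * κ t := by
  have hQ0 : 0 < Q := lt_of_lt_of_le two_pos hQ
  intro t ht
  have key : ∀ ε > 0, u t ≤ Q * κ t + ε := by
    intro ε hε
    have := image_le_of_deriv_right_lt_deriv_boundary'
      (f := u) (f' := fun x => (κ x) ^ 2 - (u x) ^ 2) (a := -τ) (b := τ)
      (B := fun x => Q * κ x + ε) (B' := fun x => Q * Dκ x)
      (fun x hx => (hu x hx).continuousAt.continuousWithinAt)
      (fun x hx => (hu x (Ico_subset_Icc_self hx)).hasDerivWithinAt)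
      (by
        have := hκpos (-τ) ⟨le_refl _, by linarith⟩
        show u (-τ) ≤ Q * κ (-τ) + ε
        rw [hu0]; nlinarith)
      ((continuousOn_const.mul hκlip.continuousOn).add continuousOn_const)
      (fun x hx => (((hκderiv x (Ico_subset_Icc_self hx)).const_mul Q).add_const ε))
      (fun x hx hfx => by
        have hxI := Ico_subset_Icc_self hx
        have hk := hκpos x hxI
        have hc := hQctrl x hxI
        have hux : u x = Q * κ x + ε := hfx
        have h1 : Q * (((1 - Q ^ 2) / Q) * (κ x) ^ 2) = (1 - Q ^ 2) * (κ x) ^ 2 := by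
          field_simp
        show (κ x) ^ 2 - (u x) ^ 2 < Q * Dκ x
        rw [hux]
        nlinarith [mul_le_mul_of_nonneg_left hc hQ0.le, h1, mul_pos hε hε,
          mul_pos (mul_pos hQ0 hk) hε])
    have := this ht
    simpa using this
  have := le_of_forall_pos_le_add key
  linarith
end

section
/- Let γ : [0,T] → ℝ² be a continuously differentiable curve and let f, r : [0,T] → ℝ be continuous functions with r nonnegative, such that f(0) ≤ ε, r(0) ≤ ε², f is differentiable with |f'(t)| ≤ r(t) for all t, and r is differentiable with |r'(t)| ≤ B·f(t)³ for some constant B > 1/4. If T is maximal with the property that f(t) ≤ 2ε on [0,T] and f(T) = 2ε, then T ≥ 1/(8Bε). -/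
open Set

/-- If `f(0) ≤ ε`, `r(0) ≤ ε²`, `|f'| ≤ r`, `|r'| ≤ B·f³` along a C¹ curve, `f ≤ 2ε` on
`[0,T]` and `f(T) = 2ε` with `T` maximal, then `T ≥ 1/(8Bε)`. -/
theorem stmt_1 (ε B T : ℝ) (hε : 0 < ε) (hB : 1 / 4 < B) (hT : 0 < T)
    (γ : ℝ → ℝ × ℝ) (hγ : ContDiff ℝ 1 γ)
    (f r f' r' : ℝ → ℝ)
    (hfcont : ContinuousOn f (Icc 0 T))
    (hrcont : ContinuousOn r (Icc 0 T))
    (hrnonneg : ∀ t ∈ Icc 0 T, 0 ≤ r t)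
    (hf0 : f 0 ≤ ε) (hr0 : r 0 ≤ ε ^ 2)
    (hfd : ∀ t ∈ Icc 0 T, HasDerivAt f (f' t) t)
    (hf'le : ∀ t ∈ Icc 0 T, |f' t| ≤ r t)
    (hrd : ∀ t ∈ Icc 0 T, HasDerivAt r (r' t) t)
    (hr'le : ∀ t ∈ Icc 0 T, |r' t| ≤ B * (f t) ^ 3)
    (hfle : ∀ t ∈ Icc 0 T, f t ≤ 2 * ε)
    (hfT : f T = 2 * ε) :
    1 / (8 * B * ε) ≤ T := by
  have hB0 : 0 < B := by linarith
  have hconv : Convex ℝ (Icc (0:ℝ) T) := convex_Icc 0 T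
  have h0mem : (0:ℝ) ∈ Icc (0:ℝ) T := ⟨le_refl 0, hT.le⟩
  -- bound on r' : |r'| ≤ 8 B ε³
  have hr'bd : ∀ x ∈ Icc (0:ℝ) T, ‖r' x‖ ≤ 8 * B * ε ^ 3 := by
    intro x hx
    have h1 := hr'le x hx
    have h2 := hfle x hx
    have hcube : f x ^ 3 ≤ 8 * ε ^ 3 := by
      nlinarith [sq_nonneg (2 * ε + f x), sq_nonneg (f x), sq_nonneg (2 * ε - f x)]
    rw [Real.norm_eq_abs]
    nlinarith
  -- r t ≤ ε² + 8 B ε³ T on [0, T]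
  have hrbd : ∀ t ∈ Icc (0:ℝ) T, r t ≤ ε ^ 2 + 8 * B * ε ^ 3 * T := by
    intro t ht
    have := hconv.norm_image_sub_le_of_norm_hasDerivWithin_le
      (fun x hx => (hrd x hx).hasDerivWithinAt) hr'bd h0mem ht
    rw [Real.norm_eq_abs, Real.norm_eq_abs, sub_zero] at this
    have habs : |t| ≤ T := by
      rw [abs_of_nonneg ht.1]; exact ht.2
    have h1 : r t - r 0 ≤ |r t - r 0| := le_abs_self _
    have h2 : 8 * B * ε ^ 3 * |t| ≤ 8 * B * ε ^ 3 * T := by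
      apply mul_le_mul_of_nonneg_left habs; positivity
    linarith
  -- |f T - f 0| ≤ (ε² + 8Bε³T) * T
  have hf'bd : ∀ x ∈ Icc (0:ℝ) T, ‖f' x‖ ≤ ε ^ 2 + 8 * B * ε ^ 3 * T := by
    intro x hx
    rw [Real.norm_eq_abs]
    exact le_trans (hf'le x hx) (hrbd x hx)
  have hfbd := hconv.norm_image_sub_le_of_norm_hasDerivWithin_le
    (fun x hx => (hfd x hx).hasDerivWithinAt) hf'bd h0mem ⟨hT.le, le_refl T⟩
  rw [Real.norm_eq_abs, Real.norm_eq_abs, sub_zero, abs_of_nonneg hT.le, hfT] at hfbd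
  have hkey : ε ≤ ε ^ 2 * T + 8 * B * ε ^ 3 * T ^ 2 := by
    have h1 : 2 * ε - f 0 ≤ |2 * ε - f 0| := le_abs_self _
    nlinarith
  by_contra hc
  push_neg at hc
  have h8 : 8 * B * ε * T < 1 := by
    have h : 0 < 8 * B * ε := by positivity
    rw [lt_div_iff₀ h] at hc
    nlinarith
  nlinarith [mul_pos hε hT, sq_nonneg (ε * T), mul_pos (mul_pos hε hε) hT]
end

section
/- Let k, g : [0,T] → ℝ be continuous with 0 < k(t) < g(t), and suppose g is differentiable with k(t)² − g(t)² − g'(t) < 0 for all t ∈ [0,T]. Let j : [0,T] → ℝ solve the Jacobi equation j'' = k²·j with j(0) = 0 and j'(0) = 1. Then j(T) ≤ (1/k(0))·exp(∫₀^T g(t) dt). -/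
/-!
The barrier `g` makes `y = exp (∫ g)` a supersolution of `y'' = k² y`. Since `j ≥ 0`, the
Wronskian `(j' - g j) exp (∫ g)` of `j` and `y` is nonincreasing, so
`(j exp (-∫ g))' ≤ exp (-2 ∫ g)`. The barrier inequality also gives `(1/g)' < 1`, hence
`g t ≥ k 0 / (1 + k 0 t)` and `exp (-∫₀ᵗ g) ≤ 1 / (1 + k 0 t)`. Integrating,
`j T exp (-∫₀ᵀ g) ≤ T / (1 + k 0 T) < 1 / k 0`.
-/

open Set Real

section Calculus

variable {f f' : ℝ → ℝ} {a b : ℝ}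

theorem monotoneOn_Icc_of_hasDerivAt_nonneg (hf : ContinuousOn f (Icc a b))
    (hf' : ∀ x ∈ Ioo a b, HasDerivAt f (f' x) x) (hf'₀ : ∀ x ∈ Ioo a b, 0 ≤ f' x) :
    MonotoneOn f (Icc a b) :=
  monotoneOn_of_hasDerivWithinAt_nonneg (convex_Icc a b) hf
    (fun x hx => (hf' x (by rwa [interior_Icc] at hx)).hasDerivWithinAt)
    (fun x hx => hf'₀ x (by rwa [interior_Icc] at hx))

theorem antitoneOn_Icc_of_hasDerivAt_nonpos (hf : ContinuousOn f (Icc a b))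
    (hf' : ∀ x ∈ Ioo a b, HasDerivAt f (f' x) x) (hf'₀ : ∀ x ∈ Ioo a b, f' x ≤ 0) :
    AntitoneOn f (Icc a b) :=
  antitoneOn_of_hasDerivWithinAt_nonpos (convex_Icc a b) hf
    (fun x hx => (hf' x (by rwa [interior_Icc] at hx)).hasDerivWithinAt)
    (fun x hx => hf'₀ x (by rwa [interior_Icc] at hx))

theorem continuousOn_primitive_Icc (hab : a ≤ b) (hf : ContinuousOn f (Icc a b)) :
    ContinuousOn (fun x => ∫ s in a..x, f s) (Icc a b) := by
  rw [← uIcc_of_le hab] at hf ⊢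
  exact intervalIntegral.continuousOn_primitive_interval hf.integrableOn_uIcc

theorem hasDerivAt_primitive_of_mem_Ioo (hf : ContinuousOn f (Icc a b)) {t : ℝ}
    (ht : t ∈ Ioo a b) : HasDerivAt (fun x => ∫ s in a..x, f s) (f t) t := by
  have hft : ContinuousAt f t := hf.continuousAt (Icc_mem_nhds ht.1 ht.2)
  refine intervalIntegral.integral_hasDerivAt_right ?_
    ((hf.mono Ioo_subset_Icc_self).stronglyMeasurableAtFilter isOpen_Ioo t ht) hft
  exact (hf.mono (Icc_subset_Icc le_rfl ht.2.le)).intervalIntegrable_of_Icc ht.1.le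

end Calculus

section Jacobi

variable {q j j' : ℝ → ℝ} {a b : ℝ}

theorem jacobi_nonneg (hj : ∀ t ∈ Icc a b, HasDerivAt j (j' t) t)
    (hj' : ∀ t ∈ Icc a b, HasDerivAt j' (q t * j t) t) (hq : ∀ t ∈ Icc a b, 0 ≤ q t)
    (hja : j a = 0) (hj'a : j' a = 1) : ∀ t ∈ Icc a b, 0 ≤ j t := by
  have hsub : Ioo a b ⊆ Icc a b := Ioo_subset_Icc_self
  have hjc := HasDerivAt.continuousOn hj
  have hj'c := HasDerivAt.continuousOn hj'
  -- `(j j')' = j'² + q j² ≥ 0` gives `j j' ≥ 0`, then `(j'²)' = 2 q j j' ≥ 0` gives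
  -- `j'² ≥ 1`, so `j'` never vanishes and keeps the sign of `j' a = 1`.
  have hjj' : ∀ t ∈ Icc a b, 0 ≤ j t * j' t := by
    intro t ht
    have hmono := monotoneOn_Icc_of_hasDerivAt_nonneg (hjc.mul hj'c)
      (fun x hx => (hj x (hsub hx)).mul (hj' x (hsub hx)))
      (fun x hx => by
        nlinarith [mul_self_nonneg (j' x), mul_nonneg (hq x (hsub hx)) (mul_self_nonneg (j x))])
    simpa [hja] using hmono (left_mem_Icc.2 (ht.1.trans ht.2)) ht ht.1
  have hsq : ∀ t ∈ Icc a b, 1 ≤ j' t ^ 2 := by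
    intro t ht
    have hmono := monotoneOn_Icc_of_hasDerivAt_nonneg (hj'c.pow 2)
      (fun x hx => (hj' x (hsub hx)).pow 2)
      (fun x hx => by
        have := mul_nonneg (hq x (hsub hx)) (hjj' x (hsub hx))
        rw [Nat.add_one_sub_one, pow_one]
        nlinarith)
    simpa [hj'a] using hmono (left_mem_Icc.2 (ht.1.trans ht.2)) ht ht.1
  have hj'pos : ∀ t ∈ Icc a b, 0 < j' t := by
    intro t ht
    by_contra! hle
    obtain ⟨s, hs, hs0⟩ := intermediate_value_Icc' ht.1 (hj'c.mono (Icc_subset_Icc le_rfl ht.2))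
      ⟨hle, hj'a ▸ zero_le_one⟩
    have := hsq s ⟨hs.1, hs.2.trans ht.2⟩
    rw [hs0] at this
    norm_num at this
  intro t ht
  have hmono := monotoneOn_Icc_of_hasDerivAt_nonneg hjc (fun x hx => hj x (hsub hx))
    (fun x hx => (hj'pos x (hsub hx)).le)
  simpa [hja] using hmono (left_mem_Icc.2 (ht.1.trans ht.2)) ht ht.1

end Jacobi

section Barrier

variable {q g g' j j' G : ℝ → ℝ} {a b c T : ℝ}

/-- `y = exp G` solves `y' = g y`, so `y'' = (g² + g') y ≥ q y`: it is a supersolution of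
`y'' = q y`, and its Wronskian with the nonnegative solution `j` is `(j' - g j) exp G`. -/
theorem antitoneOn_wronskian_mul_exp (hj : ∀ t ∈ Icc a b, HasDerivAt j (j' t) t)
    (hj' : ∀ t ∈ Icc a b, HasDerivAt j' (q t * j t) t)
    (hg : ∀ t ∈ Icc a b, HasDerivAt g (g' t) t)
    (hG : ContinuousOn G (Icc a b)) (hG' : ∀ t ∈ Ioo a b, HasDerivAt G (g t) t)
    (hjnn : ∀ t ∈ Icc a b, 0 ≤ j t) (hq : ∀ t ∈ Icc a b, q t ≤ g t ^ 2 + g' t) :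
    AntitoneOn (fun t => (j' t - g t * j t) * exp (G t)) (Icc a b) := by
  have hsub : Ioo a b ⊆ Icc a b := Ioo_subset_Icc_self
  refine antitoneOn_Icc_of_hasDerivAt_nonpos
    (((HasDerivAt.continuousOn hj').sub ((HasDerivAt.continuousOn hg).mul
      (HasDerivAt.continuousOn hj))).mul hG.rexp)
    (fun t ht => ((hj' t (hsub ht)).sub ((hg t (hsub ht)).mul (hj t (hsub ht)))).mul
      (hG' t ht).exp) (fun t ht => ?_)
  calc _ = (q t - g t ^ 2 - g' t) * j t * exp (G t) := by
        simp only [Pi.sub_apply, Pi.mul_apply]; ring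
    _ ≤ 0 := mul_nonpos_of_nonpos_of_nonneg
      (mul_nonpos_of_nonpos_of_nonneg (by linarith [hq t (hsub ht)]) (hjnn t (hsub ht)))
      (exp_pos _).le

theorem le_mul_one_add_mul_of_neg_deriv_le_sq (hg : ∀ t ∈ Icc 0 T, HasDerivAt g (g' t) t)
    (hgpos : ∀ t ∈ Icc 0 T, 0 < g t) (hg' : ∀ t ∈ Icc 0 T, -g' t ≤ g t ^ 2) (hc : 0 < c)
    (hcg : c ≤ g 0) : ∀ t ∈ Icc 0 T, c ≤ g t * (1 + c * t) := by
  have hsub : Ioo 0 T ⊆ Icc 0 T := Ioo_subset_Icc_self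
  -- `(1/g)' = -g'/g² ≤ 1`
  have hanti := antitoneOn_Icc_of_hasDerivAt_nonpos
    (((HasDerivAt.continuousOn hg).inv₀ fun t ht => (hgpos t ht).ne').sub continuousOn_id)
    (fun t ht => ((hg t (hsub ht)).inv (hgpos t (hsub ht)).ne').sub (hasDerivAt_id t))
    (fun t ht => by
      have := (div_le_one (pow_pos (hgpos t (hsub ht)) 2)).2 (hg' t (hsub ht))
      linarith)
  intro t ht
  have h : (g t)⁻¹ - t ≤ (g 0)⁻¹ - 0 := hanti (left_mem_Icc.2 (ht.1.trans ht.2)) ht ht.1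
  have hgt := hgpos t ht
  have hinv : (g t)⁻¹ ≤ c⁻¹ + t := by linarith [inv_anti₀ hc hcg]
  rw [inv_le_iff_one_le_mul₀ hgt] at hinv
  have : c * (g t * (c⁻¹ + t)) = g t * (1 + c * t) := by field_simp
  nlinarith

end Barrier

section Comparison

variable {g G j j' : ℝ → ℝ} {c T : ℝ}

theorem one_add_mul_mul_exp_neg_le_one (hG : ContinuousOn G (Icc 0 T))
    (hG' : ∀ t ∈ Ioo 0 T, HasDerivAt G (g t) t) (hG0 : G 0 = 0)
    (hcg : ∀ t ∈ Icc 0 T, c ≤ g t * (1 + c * t)) :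
    ∀ t ∈ Icc 0 T, (1 + c * t) * exp (-G t) ≤ 1 := by
  have hlin (t : ℝ) : HasDerivAt (fun s => 1 + c * s) c t := by
    simpa using ((hasDerivAt_id t).const_mul c).const_add 1
  have hanti := antitoneOn_Icc_of_hasDerivAt_nonpos
    ((continuous_const.add (continuous_const.mul continuous_id)).continuousOn.mul hG.neg.rexp)
    (fun t ht => (hlin t).mul (hG' t ht).neg.exp)
    (fun t ht => by
      have := mul_nonpos_of_nonpos_of_nonneg (sub_nonpos.2 (hcg t (Ioo_subset_Icc_self ht)))
        (exp_pos (-G t)).le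
      simp only [Pi.neg_apply]
      linarith)
  intro t ht
  simpa [hG0] using hanti (left_mem_Icc.2 (ht.1.trans ht.2)) ht ht.1

theorem mul_exp_neg_le_div_one_add_mul (hT : 0 ≤ T) (hc : 0 ≤ c)
    (hj : ∀ t ∈ Icc 0 T, HasDerivAt j (j' t) t) (hG : ContinuousOn G (Icc 0 T))
    (hG' : ∀ t ∈ Ioo 0 T, HasDerivAt G (g t) t) (hj0 : j 0 = 0) (hG0 : G 0 = 0)
    (hcg : ∀ t ∈ Icc 0 T, c ≤ g t * (1 + c * t))
    (hwron : ∀ t ∈ Icc 0 T, j' t - g t * j t ≤ exp (-G t)) :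
    j T * exp (-G T) ≤ T / (1 + c * T) := by
  have hsub : Ioo 0 T ⊆ Icc 0 T := Ioo_subset_Icc_self
  have hpos (t : ℝ) (ht : t ∈ Icc 0 T) : 0 < 1 + c * t := by nlinarith [ht.1]
  have hE := one_add_mul_mul_exp_neg_le_one hG hG' hG0 hcg
  have hB (t : ℝ) (ht : t ∈ Icc 0 T) :
      HasDerivAt (fun s => s / (1 + c * s)) (((1 + c * t) ^ 2)⁻¹) t := by
    refine ((hasDerivAt_id' t).div (((hasDerivAt_id' t).const_mul c).const_add 1)
      (hpos t ht).ne').congr_deriv ?_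
    field_simp
    ring
  have hanti := antitoneOn_Icc_of_hasDerivAt_nonpos
    (((HasDerivAt.continuousOn hj).mul hG.neg.rexp).sub
      (HasDerivAt.continuousOn hB))
    (fun t ht => ((hj t (hsub ht)).mul (hG' t ht).neg.exp).sub (hB t (hsub ht)))
    (fun t ht => by
      have hexp : exp (-G t) ≤ 1 / (1 + c * t) :=
        (le_div_iff₀ (hpos t (hsub ht))).2 (by linarith [hE t (hsub ht)])
      have hexp2 : exp (-G t) ^ 2 ≤ ((1 + c * t) ^ 2)⁻¹ := by
        simpa only [one_div, inv_pow] using pow_le_pow_left₀ (exp_pos _).le hexp 2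
      have := mul_le_mul_of_nonneg_right (hwron t (hsub ht)) (exp_pos (-G t)).le
      simp only [Pi.neg_apply]
      linarith)
  have : j T * exp (-G T) - T / (1 + c * T) ≤ j 0 * exp (-G 0) - 0 / (1 + c * 0) :=
    hanti (left_mem_Icc.2 hT) (right_mem_Icc.2 hT) hT
  simpa [hj0] using this

end Comparison

theorem stmt_6_general (T : ℝ) (hT : 0 < T) (k g g' j j' : ℝ → ℝ)
    (hg : ContinuousOn g (Set.Icc 0 T))
    (hkpos : ∀ t ∈ Set.Icc 0 T, 0 < k t)
    (hkg : ∀ t ∈ Set.Icc 0 T, k t < g t)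
    (hgd : ∀ t ∈ Set.Icc 0 T, HasDerivAt g (g' t) t)
    (hbar : ∀ t ∈ Set.Icc 0 T, (k t) ^ 2 - (g t) ^ 2 - g' t < 0)
    (hj : ∀ t ∈ Set.Icc 0 T, HasDerivAt j (j' t) t)
    (hj' : ∀ t ∈ Set.Icc 0 T, HasDerivAt j' ((k t) ^ 2 * j t) t)
    (hj0 : j 0 = 0) (hj'0 : j' 0 = 1) :
    j T ≤ (1 / k 0) * Real.exp (∫ t in (0:ℝ)..T, g t) := by
  set G : ℝ → ℝ := fun x => ∫ s in (0:ℝ)..x, g s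
  have h0 : (0 : ℝ) ∈ Icc 0 T := left_mem_Icc.2 hT.le
  have hk0 : 0 < k 0 := hkpos 0 h0
  have hGc : ContinuousOn G (Icc 0 T) := continuousOn_primitive_Icc hT.le hg
  have hG' (t : ℝ) (ht : t ∈ Ioo 0 T) : HasDerivAt G (g t) t :=
    hasDerivAt_primitive_of_mem_Ioo hg ht
  have hG0 : G 0 = 0 := intervalIntegral.integral_same
  have hjnn := jacobi_nonneg hj hj' (fun t _ => sq_nonneg (k t)) hj0 hj'0
  have hwron (t : ℝ) (ht : t ∈ Icc 0 T) : j' t - g t * j t ≤ exp (-G t) := by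
    have h : (j' t - g t * j t) * exp (G t) ≤ (j' 0 - g 0 * j 0) * exp (G 0) :=
      antitoneOn_wronskian_mul_exp hj hj' hgd hGc hG' hjnn
        (fun t ht => by linarith [hbar t ht]) h0 ht ht.1
    rw [hj0, hj'0, hG0, mul_zero, sub_zero, exp_zero, mul_one, ← le_div_iff₀ (exp_pos _)] at h
    rwa [exp_neg, ← one_div]
  have hcg := le_mul_one_add_mul_of_neg_deriv_le_sq hgd
    (fun t ht => (hkpos t ht).trans (hkg t ht))
    (fun t ht => by linarith [hbar t ht, sq_nonneg (k t)]) hk0 (hkg 0 h0).le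
  have hjT := mul_exp_neg_le_div_one_add_mul hT.le hk0.le hj hGc hG' hj0 hG0 hcg hwron
  calc j T = j T * exp (-G T) * exp (G T) := by
        rw [mul_assoc, ← exp_add, neg_add_cancel, exp_zero, mul_one]
    _ ≤ T / (1 + k 0 * T) * exp (G T) := by gcongr
    _ ≤ 1 / k 0 * exp (G T) := by
        gcongr ?_ * _
        rw [div_le_div_iff₀ (by positivity) hk0]
        linarith

/-- Upper barrier for the Jacobi equation: if `0 < k < g` on `[0,T]` with
`k² - g² - g' < 0`, `j'' = k²j`, `j(0) = 0`, `j'(0) = 1` (and `k(T) = k(0)`), then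
`j(T) ≤ (1/k(0)) exp(∫₀ᵀ g)`. -/
theorem stmt_6 (T : ℝ) (hT : 0 < T) (k g g' j j' : ℝ → ℝ)
    (hk : ContinuousOn k (Set.Icc 0 T)) (hg : ContinuousOn g (Set.Icc 0 T))
    (hkpos : ∀ t ∈ Set.Icc 0 T, 0 < k t)
    (hkg : ∀ t ∈ Set.Icc 0 T, k t < g t)
    (hgd : ∀ t ∈ Set.Icc 0 T, HasDerivAt g (g' t) t)
    (hbar : ∀ t ∈ Set.Icc 0 T, (k t) ^ 2 - (g t) ^ 2 - g' t < 0)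
    (hj : ∀ t ∈ Set.Icc 0 T, HasDerivAt j (j' t) t)
    (hj' : ∀ t ∈ Set.Icc 0 T, HasDerivAt j' ((k t) ^ 2 * j t) t)
    (hj0 : j 0 = 0) (hj'0 : j' 0 = 1)
    (hkT : k T = k 0) :
    j T ≤ (1 / k 0) * Real.exp (∫ t in (0:ℝ)..T, g t) :=
  stmt_6_general T hT k g g' j j' hg hkpos hkg hgd hbar hj hj' hj0 hj'0
end

section
/- Let k, h : [t₀,T] → ℝ be continuous with 0 < h(t) < k(t), and suppose h is differentiable with k(t)² − h(t)² − h'(t) > 0 for all t. Let j : [0,T] → ℝ solve j'' = k²·j with j(0) = 0, j'(0) = 1, and suppose j'(t)/j(t) ≥ h(t) holds at t = t₀ (for instance because j'(t)/j(t) → ∞ as t → 0⁺). Then j'(t)/j(t) ≥ h(t) for all t ∈ [t₀,T], and consequently j(T) ≥ j(t₀)·exp(∫_{t₀}^T h(t) dt). -/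
/-- Lower barrier for the Jacobi equation: if `0 < h < k` on `[t₀,T]` with
`k² - h² - h' > 0`, `j'' = k²j` on `[0,T]`, `j(0) = 0`, `j'(0) = 1`, `j > 0` on `(0,T]`,
and `j'(t₀)/j(t₀) ≥ h(t₀)`, then `j'/j ≥ h` on `[t₀,T]` and
`j(T) ≥ j(t₀) exp(∫_{t₀}ᵀ h)`. -/
theorem stmt_7 (t₀ T : ℝ) (ht₀ : 0 < t₀) (ht₀T : t₀ < T)
    (k h h' j j' : ℝ → ℝ)
    (hk : ContinuousOn k (Set.Icc t₀ T)) (hh : ContinuousOn h (Set.Icc t₀ T))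
    (hhpos : ∀ t ∈ Set.Icc t₀ T, 0 < h t)
    (hhk : ∀ t ∈ Set.Icc t₀ T, h t < k t)
    (hhd : ∀ t ∈ Set.Icc t₀ T, HasDerivAt h (h' t) t)
    (hbar : ∀ t ∈ Set.Icc t₀ T, 0 < (k t) ^ 2 - (h t) ^ 2 - h' t)
    (hj : ∀ t ∈ Set.Icc 0 T, HasDerivAt j (j' t) t)
    (hj' : ∀ t ∈ Set.Icc 0 T, HasDerivAt j' ((k t) ^ 2 * j t) t)
    (hj0 : j 0 = 0) (hj'0 : j' 0 = 1)
    (hjpos : ∀ t ∈ Set.Ioc 0 T, 0 < j t)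
    (hinit : h t₀ ≤ j' t₀ / j t₀) :
    (∀ t ∈ Set.Icc t₀ T, h t ≤ j' t / j t) ∧
    j t₀ * Real.exp (∫ t in t₀..T, h t) ≤ j T := by
  have hsub : Set.Icc t₀ T ⊆ Set.Icc 0 T := Set.Icc_subset_Icc ht₀.le le_rfl
  have hjpos' : ∀ t ∈ Set.Icc t₀ T, 0 < j t := fun t ht =>
    hjpos t ⟨lt_of_lt_of_le ht₀ ht.1, ht.2⟩
  have ht₀mem : t₀ ∈ Set.Icc t₀ T := ⟨le_rfl, ht₀T.le⟩
  have hTmem : T ∈ Set.Icc t₀ T := ⟨ht₀T.le, le_rfl⟩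
  set H : ℝ → ℝ := fun t => ∫ s in t₀..t, h s with hHdef
  have hintOn : MeasureTheory.IntegrableOn h (Set.uIcc t₀ T) := by
    rw [Set.uIcc_of_le ht₀T.le]
    exact hh.integrableOn_Icc
  have hHc : ContinuousOn H (Set.Icc t₀ T) := by
    have := intervalIntegral.continuousOn_primitive_interval hintOn
    rwa [Set.uIcc_of_le ht₀T.le] at this
  have hHd : ∀ t ∈ Set.Ioo t₀ T, HasDerivAt H (h t) t := by
    intro t ht
    have hmem : t ∈ Set.Icc t₀ T := Set.Ioo_subset_Icc_self ht
    have hint : IntervalIntegrable h MeasureTheory.volume t₀ t := by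
      apply ContinuousOn.intervalIntegrable
      apply hh.mono
      rw [Set.uIcc_of_le ht.1.le]
      exact Set.Icc_subset_Icc le_rfl hmem.2
    have hmeas := ContinuousOn.stronglyMeasurableAtFilter
      (isOpen_Ioo (a := t₀) (b := T)) (hh.mono Set.Ioo_subset_Icc_self)
      (μ := MeasureTheory.volume) t ht
    exact intervalIntegral.integral_hasDerivAt_right hint hmeas (hhd t hmem).continuousAt
  have hH0 : H t₀ = 0 := intervalIntegral.integral_same
  have hjc : ContinuousOn j (Set.Icc t₀ T) := fun t ht =>
    (hj t (hsub ht)).continuousAt.continuousWithinAt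
  have hj'c : ContinuousOn j' (Set.Icc t₀ T) := fun t ht =>
    (hj' t (hsub ht)).continuousAt.continuousWithinAt
  -- the function F = (j' - h j) exp H is monotone on [t₀, T]
  set F : ℝ → ℝ := fun t => (j' t - h t * j t) * Real.exp (H t) with hFdef
  have hFc : ContinuousOn F (Set.Icc t₀ T) :=
    (hj'c.sub (hh.mul hjc)).mul (Real.continuous_exp.comp_continuousOn hHc)
  have hFd : ∀ t ∈ Set.Ioo t₀ T,
      HasDerivAt F (((k t) ^ 2 * j t - (h' t * j t + h t * j' t)) * Real.exp (H t)
        + (j' t - h t * j t) * (Real.exp (H t) * h t)) t := by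
    intro t ht
    have hmem : t ∈ Set.Icc t₀ T := Set.Ioo_subset_Icc_self ht
    exact ((hj' t (hsub hmem)).sub ((hhd t hmem).mul (hj t (hsub hmem)))).mul (hHd t ht).exp
  have hFmono : MonotoneOn F (Set.Icc t₀ T) := by
    apply monotoneOn_of_deriv_nonneg (convex_Icc t₀ T) hFc
    · intro t ht
      rw [interior_Icc] at ht
      exact (hFd t ht).differentiableAt.differentiableWithinAt
    · intro t ht
      rw [interior_Icc] at ht
      have hmem : t ∈ Set.Icc t₀ T := Set.Ioo_subset_Icc_self ht
      rw [(hFd t ht).deriv]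
      have hE : 0 < Real.exp (H t) := Real.exp_pos _
      have hjnn : 0 ≤ j t := (hjpos' t hmem).le
      have hb := hbar t hmem
      nlinarith [mul_nonneg (mul_nonneg hb.le hjnn) hE.le]
  have hF0 : 0 ≤ F t₀ := by
    have hjp := hjpos' t₀ ht₀mem
    have : h t₀ * j t₀ ≤ j' t₀ := by
      rw [← le_div_iff₀ hjp] at *
      exact hinit
    simp only [hFdef, hH0, Real.exp_zero, mul_one]
    linarith
  have hwnn : ∀ t ∈ Set.Icc t₀ T, 0 ≤ j' t - h t * j t := by
    intro t ht
    have h2 : 0 ≤ (j' t - h t * j t) * Real.exp (H t) :=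
      le_trans hF0 (hFmono ht₀mem ht ht.1)
    have hE : 0 < Real.exp (H t) := Real.exp_pos _
    exact (mul_nonneg_iff_of_pos_right hE).mp h2
  have part1 : ∀ t ∈ Set.Icc t₀ T, h t ≤ j' t / j t := by
    intro t ht
    rw [le_div_iff₀ (hjpos' t ht)]
    linarith [hwnn t ht]
  refine ⟨part1, ?_⟩
  -- the function G = log ∘ j - H is monotone on [t₀, T]
  set G : ℝ → ℝ := fun t => Real.log (j t) - H t with hGdef
  have hGc : ContinuousOn G (Set.Icc t₀ T) := by
    apply ContinuousOn.sub _ hHc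
    exact hjc.log (fun t ht => (hjpos' t ht).ne')
  have hGmono : MonotoneOn G (Set.Icc t₀ T) := by
    have hGd : ∀ t ∈ Set.Ioo t₀ T, HasDerivAt G (j' t / j t - h t) t := by
      intro t ht
      have hmem : t ∈ Set.Icc t₀ T := Set.Ioo_subset_Icc_self ht
      exact ((hj t (hsub hmem)).log (hjpos' t hmem).ne').sub (hHd t ht)
    apply monotoneOn_of_deriv_nonneg (convex_Icc t₀ T) hGc
    · intro t ht
      rw [interior_Icc] at ht
      exact (hGd t ht).differentiableAt.differentiableWithinAt
    · intro t ht
      rw [interior_Icc] at ht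
      rw [(hGd t ht).deriv]
      have := part1 t (Set.Ioo_subset_Icc_self ht)
      linarith
  have hle : G t₀ ≤ G T := hGmono ht₀mem hTmem ht₀T.le
  have hlog : Real.log (j t₀) + H T ≤ Real.log (j T) := by
    simp only [hGdef, hH0, sub_zero] at hle
    linarith
  calc j t₀ * Real.exp (∫ t in t₀..T, h t)
      = Real.exp (Real.log (j t₀) + H T) := by
        rw [Real.exp_add, Real.exp_log (hjpos' t₀ ht₀mem)]
    _ ≤ Real.exp (Real.log (j T)) := Real.exp_le_exp.2 hlog
    _ = j T := Real.exp_log (hjpos' T hTmem)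
end

section
/- Let j solve the Jacobi equation j'' = k²j with j(0) = 0, j'(0) = 1, where k : [0,T] → ℝ is continuous and nonnegative. Then j(t) ≥ t for all t ∈ [0,T]. -/
open Filter Topology

/-- If `j'' = k²j` with `j(0) = 0`, `j'(0) = 1` and `k` continuous nonnegative on `[0,T]`,
then `j(t) ≥ t` for all `t ∈ [0,T]`. -/
theorem stmt_8 (T : ℝ) (hT : 0 < T) (k j j' : ℝ → ℝ)
    (hk : ContinuousOn k (Set.Icc 0 T))
    (hknn : ∀ t ∈ Set.Icc 0 T, 0 ≤ k t)
    (hj : ∀ t ∈ Set.Icc 0 T, HasDerivAt j (j' t) t)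
    (hj' : ∀ t ∈ Set.Icc 0 T, HasDerivAt j' ((k t) ^ 2 * j t) t)
    (hj0 : j 0 = 0) (hj'0 : j' 0 = 1) :
    ∀ t ∈ Set.Icc 0 T, t ≤ j t := by
  have hjc : ContinuousOn j (Set.Icc 0 T) :=
    fun t ht => (hj t ht).continuousAt.continuousWithinAt
  have hj'c : ContinuousOn j' (Set.Icc 0 T) :=
    fun t ht => (hj' t ht).continuousAt.continuousWithinAt
  set s : Set ℝ := {t | ∀ u ∈ Set.Icc 0 t, u ≤ j u} with hs_def
  -- Key step: if j ≥ 0 on [0,z], then u ≤ j u on [0,z]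
  have key : ∀ z ∈ Set.Icc (0:ℝ) T, (∀ u ∈ Set.Icc 0 z, 0 ≤ j u) →
      ∀ u ∈ Set.Icc 0 z, u ≤ j u := by
    intro z hz hnn
    have hsub : Set.Icc 0 z ⊆ Set.Icc 0 T := Set.Icc_subset_Icc le_rfl hz.2
    have h0z : (0:ℝ) ∈ Set.Icc 0 z := Set.left_mem_Icc.2 hz.1
    have hmono : MonotoneOn j' (Set.Icc 0 z) := by
      apply monotoneOn_of_hasDerivWithinAt_nonneg (f' := fun u => k u ^ 2 * j u)
        (convex_Icc 0 z) (hj'c.mono hsub)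
      · intro x hx
        exact (hj' x (hsub (interior_subset hx))).hasDerivWithinAt
      · intro x hx
        exact mul_nonneg (sq_nonneg _) (hnn x (interior_subset hx))
    have hj'ge : ∀ u ∈ Set.Icc 0 z, 1 ≤ j' u := by
      intro u hu
      have := hmono h0z hu hu.1
      rwa [hj'0] at this
    have hmono2 : MonotoneOn (fun u => j u - u) (Set.Icc 0 z) := by
      apply monotoneOn_of_hasDerivWithinAt_nonneg (f' := fun u => j' u - 1)
        (convex_Icc 0 z) ((hjc.mono hsub).sub continuousOn_id)
      · intro x hx
        exact ((hj x (hsub (interior_subset hx))).sub (hasDerivAt_id x)).hasDerivWithinAt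
      · intro x hx
        exact sub_nonneg.2 (hj'ge x (interior_subset hx))
    intro u hu
    have := hmono2 h0z hu hu.1
    simp only [hj0, sub_zero] at this
    linarith
  have main : Set.Icc 0 T ⊆ s := by
    apply IsClosed.Icc_subset_of_forall_exists_gt
    · -- closedness of s ∩ Icc 0 T
      apply IsSeqClosed.isClosed
      intro u t hu hut
      have htI : t ∈ Set.Icc (0:ℝ) T :=
        isClosed_Icc.mem_of_tendsto hut (.of_forall fun n => (hu n).2)
      refine ⟨?_, htI⟩
      intro v hv
      rcases eq_or_lt_of_le hv.2 with rfl | hvt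
      · have h1 : Tendsto (fun n => j (u n)) atTop (𝓝 (j v)) :=
          (hjc v htI).tendsto.comp
            (tendsto_nhdsWithin_of_tendsto_nhds_of_eventually_within u hut
              (.of_forall fun n => (hu n).2))
        exact le_of_tendsto_of_tendsto hut h1
          (.of_forall fun n => (hu n).1 (u n) ⟨(hu n).2.1, le_rfl⟩)
      · obtain ⟨n, hn⟩ := (hut.eventually (eventually_gt_nhds hvt)).exists
        exact (hu n).1 v ⟨hv.1, hn.le⟩
    · -- 0 ∈ s
      intro u hu
      have : u = 0 := le_antisymm hu.2 hu.1
      simp [this, hj0]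
    · -- the induction step
      rintro x ⟨hxs, hx0, hxT⟩ y hy
      have hxI : x ∈ Set.Icc (0:ℝ) T := ⟨hx0, hxT.le⟩
      -- find ε > 0 such that j ≥ 0 just to the right of x
      have hpos : ∃ ε > (0:ℝ), ∀ u, x < u → u < x + ε → u ≤ T → 0 ≤ j u := by
        rcases eq_or_lt_of_le hx0 with rfl | hx0'
        · -- x = 0 : use the derivative j'(0) = 1
          have hd : HasDerivAt j 1 0 := hj'0 ▸ hj 0 hxI
          have hslope := hasDerivAt_iff_tendsto_slope.1 hd
          have hev : ∀ᶠ u in 𝓝[≠] (0:ℝ), 0 < slope j 0 u :=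
            hslope.eventually (eventually_gt_nhds one_pos)
          rw [eventually_nhdsWithin_iff, Metric.eventually_nhds_iff] at hev
          obtain ⟨ε, hε, hev⟩ := hev
          refine ⟨ε, hε, fun u hu1 hu2 _ => ?_⟩
          have hne : u ∈ ({0}ᶜ : Set ℝ) := by simpa using hu1.ne'
          have hd2 : dist u 0 < ε := by
            rw [Real.dist_eq, sub_zero, abs_of_pos hu1]; linarith
          have := hev hd2 hne
          rw [slope_def_field, hj0, sub_zero, sub_zero] at this
          have : 0 < j u / u * u := mul_pos this hu1
          rw [div_mul_cancel₀ _ hu1.ne'] at this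
          exact this.le
        · -- x > 0 : j x ≥ x > 0 and continuity
          have hjx : 0 < j x := lt_of_lt_of_le hx0' (hxs x ⟨hx0, le_rfl⟩)
          have hev : ∀ᶠ u in 𝓝[Set.Icc 0 T] x, 0 < j u :=
            (hjc x hxI).eventually (eventually_gt_nhds hjx)
          rw [eventually_nhdsWithin_iff, Metric.eventually_nhds_iff] at hev
          obtain ⟨ε, hε, hev⟩ := hev
          refine ⟨ε, hε, fun u hu1 hu2 hu3 => ?_⟩
          have hmem : u ∈ Set.Icc (0:ℝ) T := ⟨le_trans hx0 hu1.le, hu3⟩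
          have hd2 : dist u x < ε := by
            rw [Real.dist_eq, abs_of_pos (by linarith)]; linarith
          exact (hev hd2 hmem).le
      obtain ⟨ε, hε, hpos⟩ := hpos
      set z := min (x + ε/2) (min y T) with hz_def
      have hzx : x < z := lt_min (by linarith) (lt_min hy hxT)
      have hzT : z ≤ T := le_trans (min_le_right _ _) (min_le_right _ _)
      have hzy : z ≤ y := le_trans (min_le_right _ _) (min_le_left _ _)
      have hzI : z ∈ Set.Icc (0:ℝ) T := ⟨le_trans hx0 hzx.le, hzT⟩
      refine ⟨z, ?_, hzx, hzy⟩
      apply key z hzI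
      intro u hu
      rcases le_or_gt u x with h | h
      · exact le_trans hu.1 (hxs u ⟨hu.1, h⟩)
      · exact hpos u h
          (lt_of_le_of_lt hu.2 (lt_of_le_of_lt (min_le_left _ _) (by linarith)))
          (le_trans hu.2 hzT)
  intro t ht
  exact main ht t ⟨ht.1, le_rfl⟩
end

section
/- Let β : [0, T/2] → (0, π/2] be differentiable and increasing with β(T/2) = π/2, and let x : [0,T/2] → (0,∞) satisfy Clairaut's relation x(t)^r·sin β(t) = c with x'(t) < 0 on (0, T/2). Then 1/x(t) = −(1/r)·(cos β(t)/x'(t))·(β'(t)/sin β(t)) for all t ∈ (0, T/2), and if additionally cos β(t) ≤ (1+ε)·|x'(t)| and sin β(t) ≥ (1/(1+ε))·β(t) on this interval, then ∫₀^{T/2} (r(1+ε)/x(t)) dt ≤ (1+ε)³·log(π/(2β(0))). In particular exp(∫₀^{T/2} r(1+ε)/x(t) dt) ≤ (π/(2β(0)))^{(1+ε)³}. -/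
/-- During the first half of an excursion toward the cusp: from Clairaut's relation
`x^r sin β = c` with `x' < 0` one gets `1/x = -(1/r)(cos β / x')(β'/sin β)`; if moreover
`cos β ≤ (1+ε)|x'|` and `sin β ≥ β/(1+ε)`, then
`∫₀^{T/2} r(1+ε)/x ≤ (1+ε)³ log(π/(2β(0)))`, hence
`exp(∫₀^{T/2} r(1+ε)/x) ≤ (π/(2β(0)))^{(1+ε)³}`. -/
theorem stmt_9 (r ε c T : ℝ) (hr : 1 < r) (hε : 0 < ε) (hc : 0 < c) (hT : 0 < T)
    (β β' x x' : ℝ → ℝ)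
    (hβmem : ∀ t ∈ Set.Icc 0 (T / 2), β t ∈ Set.Ioc 0 (Real.pi / 2))
    (hβd : ∀ t ∈ Set.Icc 0 (T / 2), HasDerivAt β (β' t) t)
    (hβmono : StrictMonoOn β (Set.Icc 0 (T / 2)))
    (hβT : β (T / 2) = Real.pi / 2)
    (hxpos : ∀ t ∈ Set.Icc 0 (T / 2), 0 < x t)
    (hxd : ∀ t ∈ Set.Icc 0 (T / 2), HasDerivAt x (x' t) t)
    (hclair : ∀ t ∈ Set.Icc 0 (T / 2), (x t) ^ r * Real.sin (β t) = c)
    (hxdec : ∀ t ∈ Set.Ioo 0 (T / 2), x' t < 0)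
    (hcos : ∀ t ∈ Set.Ioo 0 (T / 2), Real.cos (β t) ≤ (1 + ε) * |x' t|)
    (hsin : ∀ t ∈ Set.Ioo 0 (T / 2), β t / (1 + ε) ≤ Real.sin (β t)) :
    (∀ t ∈ Set.Ioo 0 (T / 2),
      1 / x t = -(1 / r) * (Real.cos (β t) / x' t) * (β' t / Real.sin (β t))) ∧
    (∫ t in (0:ℝ)..(T / 2), r * (1 + ε) / x t) ≤
      (1 + ε) ^ 3 * Real.log (Real.pi / (2 * β 0)) ∧
    Real.exp (∫ t in (0:ℝ)..(T / 2), r * (1 + ε) / x t) ≤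
      (Real.pi / (2 * β 0)) ^ ((1 + ε) ^ 3) := by
  have hT2 : (0:ℝ) < T / 2 := by linarith
  have hr0 : (0:ℝ) < r := by linarith
  have h0mem : (0:ℝ) ∈ Set.Icc 0 (T / 2) := ⟨le_refl _, hT2.le⟩
  have hTmem : T / 2 ∈ Set.Icc 0 (T / 2) := ⟨hT2.le, le_refl _⟩
  have hsinpos : ∀ t ∈ Set.Icc 0 (T / 2), 0 < Real.sin (β t) := by
    intro t ht
    have hm := hβmem t ht
    exact Real.sin_pos_of_pos_of_lt_pi hm.1 (lt_of_le_of_lt hm.2 (by linarith [Real.pi_pos]))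
  have hcosnn : ∀ t ∈ Set.Icc 0 (T / 2), 0 ≤ Real.cos (β t) := by
    intro t ht
    have hm := hβmem t ht
    exact Real.cos_nonneg_of_mem_Icc ⟨by linarith [hm.1, Real.pi_pos], hm.2⟩
  -- key polynomial identity
  have key2 : ∀ t ∈ Set.Ioo 0 (T / 2),
      r * x' t * Real.sin (β t) + x t * (Real.cos (β t) * β' t) = 0 := by
    intro t ht
    have ht' : t ∈ Set.Icc 0 (T / 2) := Set.Ioo_subset_Icc_self ht
    have hx := hxpos t ht'
    have hF := (((hxd t ht').rpow_const (p := r) (Or.inl hx.ne')).mul ((hβd t ht').sin))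
    have hEq : (fun s => x s ^ r * Real.sin (β s)) =ᶠ[nhds t] fun _ => c :=
      Filter.eventuallyEq_of_mem (Ioo_mem_nhds ht.1 ht.2)
        (fun s hs => hclair s (Set.Ioo_subset_Icc_self hs))
    have key : x' t * r * x t ^ (r - 1) * Real.sin (β t)
        + x t ^ r * (Real.cos (β t) * β' t) = 0 :=
      (hF.congr_of_eventuallyEq hEq.symm).unique (hasDerivAt_const t c)
    have hxr : x t ^ r = x t ^ (r - 1) * x t := by
      rw [← Real.rpow_add_one hx.ne' (r - 1)]; ring_nf
    rw [hxr] at key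
    have hA : (0:ℝ) < x t ^ (r - 1) := Real.rpow_pos_of_pos hx _
    apply mul_left_cancel₀ hA.ne'
    rw [mul_zero]
    linear_combination key
  have part1 : ∀ t ∈ Set.Ioo 0 (T / 2),
      1 / x t = -(1 / r) * (Real.cos (β t) / x' t) * (β' t / Real.sin (β t)) := by
    intro t ht
    have ht' : t ∈ Set.Icc 0 (T / 2) := Set.Ioo_subset_Icc_self ht
    have hx := hxpos t ht'
    have hs := hsinpos t ht'
    have hx' := hxdec t ht
    have k := key2 t ht
    have h1 : x t ≠ 0 := hx.ne'
    have h2 : Real.sin (β t) ≠ 0 := hs.ne'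
    have h3 : x' t ≠ 0 := hx'.ne
    have h4 : r ≠ 0 := hr0.ne'
    field_simp
    linear_combination k
  refine ⟨part1, ?_⟩
  -- β' positive on the open interval
  have hβ'pos : ∀ t ∈ Set.Ioo 0 (T / 2), 0 < β' t := by
    intro t ht
    have ht' : t ∈ Set.Icc 0 (T / 2) := Set.Ioo_subset_Icc_self ht
    have hx := hxpos t ht'
    have hs := hsinpos t ht'
    have hx' := hxdec t ht
    have hcn := hcosnn t ht'
    have k := key2 t ht
    by_contra h
    push_neg at h
    have h1 : Real.cos (β t) * β' t ≤ 0 := mul_nonpos_of_nonneg_of_nonpos hcn h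
    nlinarith [mul_pos (mul_pos hr0 (neg_pos.2 hx')) hs,
      mul_nonpos_of_nonneg_of_nonpos hx.le h1]
  -- pointwise bound:  r(1+ε)/x ≤ (1+ε)^3 β'/β
  have hbound : ∀ t ∈ Set.Ioo 0 (T / 2),
      r * (1 + ε) / x t ≤ (1 + ε) ^ 3 * (β' t / β t) := by
    intro t ht
    have ht' : t ∈ Set.Icc 0 (T / 2) := Set.Ioo_subset_Icc_self ht
    have hx := hxpos t ht'
    have hs := hsinpos t ht'
    have hx' := hxdec t ht
    have hβp := (hβmem t ht').1
    have hβ' := hβ'pos t ht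
    have hc1 := hcos t ht
    have hs1 := hsin t ht
    rw [abs_of_neg hx'] at hc1
    have k := key2 t ht
    rw [div_le_iff₀ hx]
    have h1 : (1 + ε) ^ 3 * (β' t / β t) * x t
        = ((1 + ε) ^ 3 * β' t * x t) / β t := by ring
    rw [h1, le_div_iff₀ hβp]
    -- target: r*(1+ε)*β t ≤ (1+ε)^3 * β' t * x t
    have hε1 : (0:ℝ) < 1 + ε := by linarith
    have h2 : (-x' t) * (r * Real.sin (β t)) ≤ (-x' t) * ((1 + ε) * (x t * β' t)) := by
      nlinarith [mul_le_mul_of_nonneg_right hc1 (mul_nonneg hx.le hβ'.le), k]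
    have step1 : r * Real.sin (β t) ≤ (1 + ε) * (x t * β' t) :=
      le_of_mul_le_mul_left h2 (neg_pos.2 hx')
    have hs1' : β t ≤ (1 + ε) * Real.sin (β t) := by
      rw [div_le_iff₀ hε1] at hs1; linarith [hs1]
    nlinarith [mul_le_mul_of_nonneg_left hs1' (mul_nonneg hr0.le hε1.le),
      mul_le_mul_of_nonneg_left step1 (by positivity : (0:ℝ) ≤ (1 + ε) ^ 2)]
  -- integral of β'/β
  have hβcont : ContinuousOn β (Set.Icc 0 (T / 2)) :=
    fun t ht => ((hβd t ht).continuousAt).continuousWithinAt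
  have hLd : ∀ t ∈ Set.Icc 0 (T / 2),
      HasDerivAt (fun s => Real.log (β s)) (β' t / β t) t := by
    intro t ht
    exact (hβd t ht).log (hβmem t ht).1.ne'
  have hL'int : IntervalIntegrable (fun t => β' t / β t) MeasureTheory.volume 0 (T / 2) := by
    rw [intervalIntegrable_iff_integrableOn_Ioc_of_le hT2.le]
    apply intervalIntegral.integrableOn_deriv_of_nonneg
      (g := fun s => Real.log (β s))
    · exact Real.continuousOn_log.comp hβcont
        (fun t ht => (hβmem t ht).1.ne')
    · exact fun t ht => hLd t (Set.Ioo_subset_Icc_self ht)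
    · intro t ht
      exact div_nonneg (hβ'pos t ht).le (hβmem t (Set.Ioo_subset_Icc_self ht)).1.le
  have hFTC : (∫ t in (0:ℝ)..(T / 2), β' t / β t)
      = Real.log (Real.pi / (2 * β 0)) := by
    rw [intervalIntegral.integral_eq_sub_of_hasDerivAt
      (f := fun s => Real.log (β s)) (f' := fun t => β' t / β t)
      (fun t ht => hLd t (by rwa [Set.uIcc_of_le hT2.le] at ht)) hL'int]
    have hβ0 := (hβmem 0 h0mem).1
    rw [hβT, ← Real.log_div (by positivity) hβ0.ne']
    congr 1
    field_simp
  -- integrability of the LHS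
  have hfint : IntervalIntegrable (fun t => r * (1 + ε) / x t) MeasureTheory.volume 0 (T / 2) := by
    apply ContinuousOn.intervalIntegrable
    rw [Set.uIcc_of_le hT2.le]
    exact continuousOn_const.div
      (fun t ht => ((hxd t ht).continuousAt).continuousWithinAt)
      (fun t ht => (hxpos t ht).ne')
  have hgint : IntervalIntegrable (fun t => (1 + ε) ^ 3 * (β' t / β t))
      MeasureTheory.volume 0 (T / 2) := hL'int.const_mul _
  have hmono : (∫ t in (0:ℝ)..(T / 2), r * (1 + ε) / x t)
      ≤ ∫ t in (0:ℝ)..(T / 2), (1 + ε) ^ 3 * (β' t / β t) := by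
    apply intervalIntegral.integral_mono_ae_restrict hT2.le hfint hgint
    have h : ∀ᵐ t ∂(MeasureTheory.volume.restrict (Set.Ioo 0 (T / 2))),
        r * (1 + ε) / x t ≤ (1 + ε) ^ 3 * (β' t / β t) :=
      (MeasureTheory.ae_restrict_iff' measurableSet_Ioo).2
        (MeasureTheory.ae_of_all _ hbound)
    rwa [MeasureTheory.Measure.restrict_congr_set MeasureTheory.Ioo_ae_eq_Icc] at h
  have part2 : (∫ t in (0:ℝ)..(T / 2), r * (1 + ε) / x t)
      ≤ (1 + ε) ^ 3 * Real.log (Real.pi / (2 * β 0)) := by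
    calc (∫ t in (0:ℝ)..(T / 2), r * (1 + ε) / x t)
        ≤ ∫ t in (0:ℝ)..(T / 2), (1 + ε) ^ 3 * (β' t / β t) := hmono
      _ = (1 + ε) ^ 3 * ∫ t in (0:ℝ)..(T / 2), β' t / β t := by
          rw [intervalIntegral.integral_const_mul]
      _ = (1 + ε) ^ 3 * Real.log (Real.pi / (2 * β 0)) := by rw [hFTC]
  refine ⟨part2, ?_⟩
  have hβ0 := (hβmem 0 h0mem).1
  have hbase : (0:ℝ) < Real.pi / (2 * β 0) := by positivity
  rw [Real.rpow_def_of_pos hbase]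
  exact Real.exp_le_exp.2 (le_of_le_of_eq part2 (mul_comm _ _))
end

section
/- For a Riemannian metric G on an open set of ℝ^{2N} whose matrix entries G_{ij} have all partial derivatives up to order k+2 bounded by A at a point p, and whose inverse satisfies ‖G^{−1}(p)‖ ≤ B, the curvature tensor satisfies ‖∇^k R(p)‖² ≤ C(k, A)·B^{2(k+2)}·B^{2(k+2)}·B^{2(k+3)} = C(k,A)·B^{6k+14}, where the norm is taken with respect to G itself. -/
open scoped BigOperators

/-- Partial derivative `∂f/∂x_i` at `x`. -/
noncomputable def pd {n : ℕ} (f : (Fin n → ℝ) → ℝ) (i : Fin n) (x : Fin n → ℝ) : ℝ :=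
  fderiv ℝ f x (Pi.single i 1)

/-- Christoffel symbols `Γ^m_{ij} = (1/2) G^{mk}(∂_j G_{ki} + ∂_i G_{kj} - ∂_k G_{ij})`. -/
noncomputable def christoffel {n : ℕ} (G Ginv : (Fin n → ℝ) → Fin n → Fin n → ℝ)
    (x : Fin n → ℝ) (m i j : Fin n) : ℝ :=
  (1 / 2) * ∑ k, Ginv x m k *
    (pd (fun y => G y k i) j x + pd (fun y => G y k j) i x - pd (fun y => G y i j) k x)

/-- Curvature tensor components
`R^l_{ijk} = ∂_j Γ^l_{ik} - ∂_k Γ^l_{ij} + Γ^l_{js}Γ^s_{ik} - Γ^l_{ks}Γ^s_{ij}`. -/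
noncomputable def riemann {n : ℕ} (G Ginv : (Fin n → ℝ) → Fin n → Fin n → ℝ)
    (x : Fin n → ℝ) (l i j k : Fin n) : ℝ :=
  pd (fun y => christoffel G Ginv y l i k) j x
    - pd (fun y => christoffel G Ginv y l i j) k x
    + ∑ s, christoffel G Ginv x l j s * christoffel G Ginv x s i k
    - ∑ s, christoffel G Ginv x l k s * christoffel G Ginv x s i j

/-- Covariant derivative of a `(1,q)`-tensor field (one upper index, `q` lower indices);
the new (last) index is the direction of differentiation. -/
noncomputable def covDeriv {n : ℕ} (G Ginv : (Fin n → ℝ) → Fin n → Fin n → ℝ) {q : ℕ}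
    (T : (Fin n → ℝ) → Fin n → (Fin q → Fin n) → ℝ)
    (x : Fin n → ℝ) (l : Fin n) (idx : Fin (q + 1) → Fin n) : ℝ :=
  pd (fun y => T y l (fun a => idx a.castSucc)) (idx (Fin.last q)) x
    + ∑ s, christoffel G Ginv x l (idx (Fin.last q)) s * T x s (fun a => idx a.castSucc)
    - ∑ a : Fin q, ∑ s, christoffel G Ginv x s (idx (Fin.last q)) (idx a.castSucc) *
        T x l (Function.update (fun b => idx b.castSucc) a s)

/-- The `k`-th covariant derivative `∇^k R` of the curvature tensor, a `(1,3+k)`-tensor. -/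
noncomputable def covDerivIterR {n : ℕ} (G Ginv : (Fin n → ℝ) → Fin n → Fin n → ℝ) :
    (k : ℕ) → (Fin n → ℝ) → Fin n → (Fin (3 + k) → Fin n) → ℝ
  | 0 => fun x l idx => riemann G Ginv x l (idx 0) (idx 1) (idx 2)
  | (k + 1) => covDeriv G Ginv (covDerivIterR G Ginv k)

/-- The squared `G`-norm of `∇^k R`, obtained by contracting lower index pairs with
`G^{ij}` and the upper pair with `G_{lm}`. -/
noncomputable def covNormSq {n : ℕ} (G Ginv : (Fin n → ℝ) → Fin n → Fin n → ℝ)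
    (k : ℕ) (x : Fin n → ℝ) : ℝ :=
  ∑ l, ∑ m, ∑ I : Fin (3 + k) → Fin n, ∑ J : Fin (3 + k) → Fin n,
    covDerivIterR G Ginv k x l I * covDerivIterR G Ginv k x m J *
      (∏ a, Ginv x (I a) (J a)) * G x l m

namespace S18


/-- `Good p B r c d f` : `f` is smooth and all its iterated partial derivatives
up to order `r` at `p` are bounded by `c * B ^ (d + order)`. -/
def Good {n : ℕ} (p : Fin n → ℝ) (B : ℝ) : ℕ → ℝ → ℕ → ((Fin n → ℝ) → ℝ) → Prop
  | 0, c, d, f => ContDiff ℝ (⊤ : ℕ∞) f ∧ |f p| ≤ c * B ^ d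
  | r+1, c, d, f => (ContDiff ℝ (⊤ : ℕ∞) f ∧ |f p| ≤ c * B ^ d) ∧
      ∀ i : Fin n, Good p B r c (d+1) (pd f i)

variable {n : ℕ} {p : Fin n → ℝ} {B c c' : ℝ} {r r' d d' : ℕ} {f g : (Fin n → ℝ) → ℝ}

theorem Good.bound : ∀ {r c d f}, Good p B r c d f → |f p| ≤ c * B ^ d
  | 0, _, _, _, h => h.2
  | _+1, _, _, _, h => h.1.2

theorem Good.pd (h : Good p B (r+1) c d f) (i : Fin n) : Good p B r c (d+1) (pd f i) := h.2 i

theorem Good.congr (h : Good p B r c d f) (he : ∀ x, f x = g x) : Good p B r c d g := by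
  have : f = g := funext he
  exact this ▸ h

theorem Good.cast (h : Good p B r c d f) (hc : c = c') (hd : d = d') : Good p B r c' d' f := by
  subst hc; subst hd; exact h

theorem Good.mono_r : ∀ {r r' c d f}, r' ≤ r → Good p B r c d f → Good p B r' c d f := by
  intro r
  induction r with
  | zero => intro r' c d f h hf; rw [Nat.le_zero.mp h]; exact hf
  | succ r ih =>
    intro r' c d f h hf
    match r', h with
    | 0, _ => exact hf.1
    | (r''+1), h => exact ⟨hf.1, fun i => ih (Nat.succ_le_succ_iff.mp h) (hf.2 i)⟩

theorem Good.mono_cd (hB : 1 ≤ B) : ∀ {r c c' d d' f}, 0 ≤ c → c ≤ c' → d ≤ d' →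
    Good p B r c d f → Good p B r c' d' f := by
  have hB0 : (0:ℝ) ≤ B := le_trans zero_le_one hB
  have key : ∀ (c c' : ℝ) (d d' : ℕ), 0 ≤ c → c ≤ c' → d ≤ d' → c * B ^ d ≤ c' * B ^ d' := by
    intro c c' d d' h0 hc hd
    exact mul_le_mul hc (pow_le_pow_right₀ hB hd) (pow_nonneg hB0 d) (le_trans h0 hc)
  intro r
  induction r with
  | zero => intro c c' d d' f h0 hc hd hf; exact ⟨hf.1, le_trans hf.2 (key c c' d d' h0 hc hd)⟩
  | succ r ih =>
    intro c c' d d' f h0 hc hd hf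
    exact ⟨⟨hf.1.1, le_trans hf.1.2 (key c c' d d' h0 hc hd)⟩,
      fun i => ih h0 hc (Nat.succ_le_succ hd) (hf.2 i)⟩

/- pointwise derivative rules -/
theorem pd_add (hf : Differentiable ℝ f) (hg : Differentiable ℝ g) (i : Fin n) (x) :
    pd (fun y => f y + g y) i x = pd f i x + pd g i x := by
  simp [pd, fderiv_fun_add (hf x) (hg x)]

theorem pd_neg (i : Fin n) (x) : pd (fun y => -f y) i x = -pd f i x := by
  simp [pd, fderiv_neg]

theorem pd_mul (hf : Differentiable ℝ f) (hg : Differentiable ℝ g) (i : Fin n) (x) :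
    pd (fun y => f y * g y) i x = pd f i x * g x + f x * pd g i x := by
  simp [pd, fderiv_fun_mul (hf x) (hg x)]
  ring

theorem pd_const (a : ℝ) (i : Fin n) (x) : pd (fun _ => a) i x = 0 := by
  simp [pd]

theorem pd_const_mul (hf : Differentiable ℝ f) (a : ℝ) (i : Fin n) (x) :
    pd (fun y => a * f y) i x = a * pd f i x := by
  simp [pd, fderiv_const_mul (hf x) a]

theorem pd_sum {ι : Type*} (s : Finset ι) (F : ι → (Fin n → ℝ) → ℝ)
    (h : ∀ a ∈ s, Differentiable ℝ (F a)) (i : Fin n) (x) :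
    pd (fun y => ∑ a ∈ s, F a y) i x = ∑ a ∈ s, pd (F a) i x := by
  simp [pd, fderiv_fun_sum (fun a ha => h a ha x)]

theorem contDiff_pd (hf : ContDiff ℝ (⊤ : ℕ∞) f) (i : Fin n) : ContDiff ℝ (⊤ : ℕ∞) (pd f i) :=
  (hf.fderiv_right (by simp)).clm_apply contDiff_const

/- combinators -/
theorem Good.add : ∀ {r d f g}, Good p B r c d f → Good p B r c' d g →
    Good p B r (c + c') d (fun x => f x + g x) := by
  intro r
  induction r with
  | zero =>
    intro d f g hf hg
    exact ⟨hf.1.add hg.1, le_trans (abs_add_le _ _) (by rw [add_mul]; exact add_le_add hf.2 hg.2)⟩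
  | succ r ih =>
    intro d f g hf hg
    refine ⟨⟨hf.1.1.add hg.1.1, le_trans (abs_add_le _ _)
      (by rw [add_mul]; exact add_le_add hf.1.2 hg.1.2)⟩, fun i => ?_⟩
    exact (ih (hf.2 i) (hg.2 i)).congr fun x =>
      (pd_add (hf.1.1.differentiable (by simp)) (hg.1.1.differentiable (by simp)) i x).symm

theorem Good.neg : ∀ {r d f}, Good p B r c d f → Good p B r c d (fun x => -f x) := by
  intro r
  induction r with
  | zero => intro d f hf; exact ⟨hf.1.neg, by rw [abs_neg]; exact hf.2⟩
  | succ r ih =>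
    intro d f hf
    exact ⟨⟨hf.1.1.neg, by rw [abs_neg]; exact hf.1.2⟩,
      fun i => (ih (hf.2 i)).congr fun x => (pd_neg i x).symm⟩

theorem Good.sub (hf : Good p B r c d f) (hg : Good p B r c' d g) :
    Good p B r (c + c') d (fun x => f x - g x) :=
  (hf.add hg.neg).congr fun x => (sub_eq_add_neg (f x) (g x)).symm

theorem Good.zero (hB : 1 ≤ B) (hc : 0 ≤ c) : ∀ (r d : ℕ), Good p B r c d (fun _ => (0:ℝ)) := by
  have hb : ∀ d : ℕ, (0:ℝ) ≤ c * B ^ d := fun d =>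
    mul_nonneg hc (pow_nonneg (le_trans zero_le_one hB) d)
  intro r
  induction r with
  | zero => intro d; exact ⟨contDiff_const, by simpa using hb d⟩
  | succ r ih =>
    intro d
    exact ⟨⟨contDiff_const, by simpa using hb d⟩,
      fun i => (ih (d+1)).congr fun x => (pd_const 0 i x).symm⟩

theorem Good.const_mul (a : ℝ) : ∀ {r d f}, Good p B r c d f →
    Good p B r (|a| * c) d (fun x => a * f x) := by
  intro r
  induction r with
  | zero =>
    intro d f hf
    exact ⟨contDiff_const.mul hf.1, by
      rw [abs_mul, mul_assoc]; exact mul_le_mul_of_nonneg_left hf.2 (abs_nonneg a)⟩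
  | succ r ih =>
    intro d f hf
    refine ⟨⟨contDiff_const.mul hf.1.1, by
      rw [abs_mul, mul_assoc]; exact mul_le_mul_of_nonneg_left hf.1.2 (abs_nonneg a)⟩, fun i => ?_⟩
    exact (ih (hf.2 i)).congr fun x =>
      (pd_const_mul (hf.1.1.differentiable (by simp)) a i x).symm

theorem Good.mul (hB : 1 ≤ B) (hc : 0 ≤ c) (hc' : 0 ≤ c') :
    ∀ {r d d' f g}, Good p B r c d f → Good p B r c' d' g →
    Good p B r (2 ^ r * (c * c')) (d + d') (fun x => f x * g x) := by
  have hB0 : (0:ℝ) ≤ B := le_trans zero_le_one hB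
  have hbd : ∀ (d d' : ℕ) (f g : (Fin n → ℝ) → ℝ), |f p| ≤ c * B ^ d → |g p| ≤ c' * B ^ d' →
      |f p * g p| ≤ c * c' * B ^ (d + d') := by
    intro d d' f g h1 h2
    rw [abs_mul, pow_add]
    calc |f p| * |g p| ≤ (c * B ^ d) * (c' * B ^ d') :=
          mul_le_mul h1 h2 (abs_nonneg _) (le_trans (abs_nonneg _) h1)
      _ = c * c' * (B ^ d * B ^ d') := by ring
  intro r
  induction r with
  | zero =>
    intro d d' f g hf hg
    refine ⟨hf.1.mul hg.1, ?_⟩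
    simpa using hbd d d' f g hf.2 hg.2
  | succ r ih =>
    intro d d' f g hf hg
    have h2r : (1:ℝ) ≤ 2 ^ (r+1) := one_le_pow₀ one_le_two
    refine ⟨⟨hf.1.1.mul hg.1.1, ?_⟩, fun i => ?_⟩
    · calc |f p * g p| ≤ c * c' * B ^ (d + d') := hbd d d' f g hf.1.2 hg.1.2
        _ ≤ 2 ^ (r+1) * (c * c') * B ^ (d + d') := by
            have : (0:ℝ) ≤ c * c' * B ^ (d+d') :=
              mul_nonneg (mul_nonneg hc hc') (pow_nonneg hB0 _)
            nlinarith
    · have t1 := ih (hf.2 i) (Good.mono_r (Nat.le_succ r) hg)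
      have t2 := ih (Good.mono_r (Nat.le_succ r) hf) (hg.2 i)
      have t2' := t2.cast rfl (show d + (d' + 1) = d + 1 + d' by omega)
      have t3 := t1.add t2'
      have t4 := t3.cast (show (2:ℝ)^r*(c*c') + 2^r*(c*c') = 2^(r+1)*(c*c') by ring)
        (show d + 1 + d' = (d + d') + 1 by omega)
      exact t4.congr fun x =>
        (pd_mul (hf.1.1.differentiable (by simp)) (hg.1.1.differentiable (by simp)) i x).symm

theorem Good.sum {ι : Type*} [DecidableEq ι] (hB : 1 ≤ B) (hc : 0 ≤ c) {r d : ℕ}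
    {s : Finset ι} {F : ι → (Fin n → ℝ) → ℝ} (h : ∀ a ∈ s, Good p B r c d (F a)) :
    Good p B r ((s.card : ℝ) * c) d (fun x => ∑ a ∈ s, F a x) := by
  induction s using Finset.induction_on with
  | empty =>
    have h0 := Good.zero (p := p) hB (le_refl (0:ℝ)) r d
    have h1 : Good p B r ((Finset.card (∅ : Finset ι) : ℝ) * c) d (fun _ => (0:ℝ)) := by
      refine h0.mono_cd hB le_rfl ?_ le_rfl
      simp
    exact h1.congr fun x => by simp
  | @insert a s ha ih =>
    have h1 : Good p B r c d (F a) := h a (Finset.mem_insert_self a s)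
    have h2 := ih (fun b hb => h b (Finset.mem_insert_of_mem hb))
    have h3 := h1.add h2
    refine (h3.cast ?_ rfl).congr fun x => (Finset.sum_insert (f := fun b => F b x) ha).symm
    rw [Finset.card_insert_of_notMem ha]
    push_cast
    ring

/- conversion from iteratedFDeriv bounds -/
theorem norm_iteratedFDeriv_pd_le (hf : ContDiff ℝ (⊤ : ℕ∞) f) (q : ℕ) (x : Fin n → ℝ) (i : Fin n) :
    ‖iteratedFDeriv ℝ q (pd f i) x‖ ≤ ‖iteratedFDeriv ℝ (q+1) f x‖ := by
  have hfd : ContDiff ℝ (⊤ : ℕ∞) (fderiv ℝ f) := hf.fderiv_right (by simp)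
  have he : pd f i = (ContinuousLinearMap.apply ℝ ℝ (Pi.single i 1)) ∘ (fderiv ℝ f) := rfl
  rw [he, ContinuousLinearMap.iteratedFDeriv_comp_left _ hfd.contDiffAt (by exact_mod_cast le_top)]
  calc ‖(ContinuousLinearMap.apply ℝ ℝ (Pi.single i (1:ℝ))).compContinuousMultilinearMap
        (iteratedFDeriv ℝ q (fderiv ℝ f) x)‖
      ≤ ‖ContinuousLinearMap.apply ℝ ℝ (Pi.single i (1:ℝ) : Fin n → ℝ)‖ *
        ‖iteratedFDeriv ℝ q (fderiv ℝ f) x‖ :=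
        ContinuousLinearMap.norm_compContinuousMultilinearMap_le _ _
    _ ≤ 1 * ‖iteratedFDeriv ℝ q (fderiv ℝ f) x‖ := by
        refine mul_le_mul_of_nonneg_right ?_ (norm_nonneg _)
        refine ContinuousLinearMap.opNorm_le_bound _ zero_le_one (fun L => ?_)
        rw [one_mul]
        calc ‖ContinuousLinearMap.apply ℝ ℝ (Pi.single i (1:ℝ) : Fin n → ℝ) L‖
            = ‖L (Pi.single i 1)‖ := rfl
          _ ≤ ‖L‖ * ‖(Pi.single i (1:ℝ) : Fin n → ℝ)‖ := L.le_opNorm _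
          _ = ‖L‖ := by rw [Pi.norm_single]; norm_num
    _ = ‖iteratedFDeriv ℝ (q+1) f x‖ := by rw [one_mul, norm_iteratedFDeriv_fderiv]

theorem good_of_iteratedFDeriv (hB : 1 ≤ B) (hc : 0 ≤ c) :
    ∀ (r d : ℕ) (f : (Fin n → ℝ) → ℝ), ContDiff ℝ (⊤ : ℕ∞) f →
    (∀ q, q ≤ r → ‖iteratedFDeriv ℝ q f p‖ ≤ c * B ^ (d + q)) → Good p B r c d f := by
  intro r
  induction r with
  | zero =>
    intro d f hf h
    refine ⟨hf, ?_⟩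
    have := h 0 le_rfl
    rwa [norm_iteratedFDeriv_zero, Real.norm_eq_abs, Nat.add_zero] at this
  | succ r ih =>
    intro d f hf h
    refine ⟨⟨hf, ?_⟩, fun i => ?_⟩
    · have := h 0 (Nat.zero_le _)
      rwa [norm_iteratedFDeriv_zero, Real.norm_eq_abs, Nat.add_zero] at this
    · refine ih (d+1) (pd f i) (contDiff_pd hf i) (fun q hq => ?_)
      calc ‖iteratedFDeriv ℝ q (pd f i) p‖ ≤ ‖iteratedFDeriv ℝ (q+1) f p‖ :=
            norm_iteratedFDeriv_pd_le hf q p i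
        _ ≤ c * B ^ (d + (q+1)) := h (q+1) (Nat.succ_le_succ hq)
        _ = c * B ^ (d + 1 + q) := by ring_nf

structure Hyps (n k : ℕ) (A B : ℝ) (G Ginv : (Fin n → ℝ) → Fin n → Fin n → ℝ)
    (p : Fin n → ℝ) : Prop where
  hB : 1 ≤ B
  hG : ∀ i j, ContDiff ℝ (⊤ : ℕ∞) fun x => G x i j
  hGinv : ∀ i j, ContDiff ℝ (⊤ : ℕ∞) fun x => Ginv x i j
  hleft : ∀ x i j, (∑ s, Ginv x i s * G x s j) = if i = j then (1:ℝ) else 0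
  hright : ∀ x i j, (∑ s, G x i s * Ginv x s j) = if i = j then (1:ℝ) else 0
  hA : ∀ q ≤ k + 2, ∀ i j, ‖iteratedFDeriv ℝ q (fun x => G x i j) p‖ ≤ A
  hBinv : ∀ i j, |Ginv p i j| ≤ B

variable {n k : ℕ} {A B : ℝ} {G Ginv : (Fin n → ℝ) → Fin n → Fin n → ℝ} {p : Fin n → ℝ}

theorem Hyps.A_nonneg (h : Hyps n k A B G Ginv p) (i j : Fin n) : 0 ≤ A :=
  le_trans (norm_nonneg _) (h.hA 0 (Nat.zero_le _) i j)

theorem pdG_good (h : Hyps n k A B G Ginv p) (i j m : Fin n) :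
    Good p B (k+1) A 0 (pd (fun x => G x i j) m) := by
  refine good_of_iteratedFDeriv h.hB (h.A_nonneg i j) (k+1) 0 _
    (contDiff_pd (h.hG i j) m) (fun q hq => ?_)
  calc ‖iteratedFDeriv ℝ q (pd (fun x => G x i j) m) p‖
      ≤ ‖iteratedFDeriv ℝ (q+1) (fun x => G x i j) p‖ :=
        norm_iteratedFDeriv_pd_le (h.hG i j) q p m
    _ ≤ A := h.hA (q+1) (by omega) i j
    _ ≤ A * B ^ (0 + q) := le_mul_of_one_le_right (h.A_nonneg i j) (one_le_pow₀ h.hB)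

theorem pd_Ginv (h : Hyps n k A B G Ginv p) (i j m : Fin n) (x : Fin n → ℝ) :
    pd (fun y => Ginv y i j) m x =
      ∑ s, (-(∑ a, Ginv x i a * pd (fun y => G y a s) m x)) * Ginv x s j := by
  have hGd : ∀ a b, Differentiable ℝ fun y => G y a b :=
    fun a b => (h.hG a b).differentiable (by simp)
  have hId : ∀ a b, Differentiable ℝ fun y => Ginv y a b :=
    fun a b => (h.hGinv a b).differentiable (by simp)
  have key : ∀ b : Fin n, ∑ s, pd (fun y => Ginv y i s) m x * G x s b
      = -∑ s, Ginv x i s * pd (fun y => G y s b) m x := by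
    intro b
    have h0 : pd (fun y => ∑ s, Ginv y i s * G y s b) m x = 0 := by
      have he : (fun y => ∑ s, Ginv y i s * G y s b)
          = (fun _ => if i = b then (1:ℝ) else 0) := funext fun y => h.hleft y i b
      rw [he, pd_const]
    rw [pd_sum Finset.univ (fun s y => Ginv y i s * G y s b) (fun s _ => (hId i s).mul (hGd s b)) m x] at h0
    have h1 : ∀ s : Fin n, pd (fun y => Ginv y i s * G y s b) m x
        = pd (fun y => Ginv y i s) m x * G x s b + Ginv x i s * pd (fun y => G y s b) m x :=
      fun s => pd_mul (hId i s) (hGd s b) m x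
    rw [Finset.sum_congr rfl (fun s _ => h1 s), Finset.sum_add_distrib] at h0
    linarith
  calc pd (fun y => Ginv y i j) m x
      = ∑ b, pd (fun y => Ginv y i b) m x * (if b = j then (1:ℝ) else 0) := by
        rw [Finset.sum_congr rfl (fun b _ => mul_ite_zero ..)]
        simp
    _ = ∑ b, pd (fun y => Ginv y i b) m x * ∑ s, G x b s * Ginv x s j := by
        refine Finset.sum_congr rfl fun b _ => ?_
        rw [h.hright x b j]
    _ = ∑ s, (∑ b, pd (fun y => Ginv y i b) m x * G x b s) * Ginv x s j := by
        simp only [Finset.mul_sum, Finset.sum_mul]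
        rw [Finset.sum_comm]
        exact Finset.sum_congr rfl fun s _ => Finset.sum_congr rfl fun b _ => by ring
    _ = ∑ s, (-(∑ a, Ginv x i a * pd (fun y => G y a s) m x)) * Ginv x s j := by
        refine Finset.sum_congr rfl fun s _ => ?_
        rw [key s]

theorem Ginv_good (n k : ℕ) (A : ℝ) :
    ∀ q, q ≤ k + 1 → ∃ c : ℝ, 0 ≤ c ∧
      ∀ (B : ℝ) (G Ginv : (Fin n → ℝ) → Fin n → Fin n → ℝ) (p : Fin n → ℝ),
        Hyps n k A B G Ginv p → ∀ i j, Good p B q c 1 (fun x => Ginv x i j) := by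
  intro q
  induction q with
  | zero =>
    intro _
    refine ⟨1, zero_le_one, fun B G Ginv p h i j => ⟨h.hGinv i j, ?_⟩⟩
    simpa using h.hBinv i j
  | succ q ih =>
    intro hq
    obtain ⟨c, hc, H⟩ := ih (by omega)
    refine ⟨(n:ℝ) * (2 ^ q * (((n:ℝ) * (2 ^ q * (c * |A|))) * c)) + 1, by positivity, ?main⟩
    case main =>
      intro B G Ginv p h i j
      have hA : 0 ≤ A := h.A_nonneg i j
      have hB := h.hB
      rw [abs_of_nonneg hA]
      set c2 : ℝ := (n:ℝ) * (2 ^ q * (((n:ℝ) * (2 ^ q * (c * A))) * c)) with hc2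
      have hc2n : 0 ≤ c2 := by positivity
      refine ⟨⟨h.hGinv i j, ?_⟩, fun m => ?_⟩
      · calc |Ginv p i j| ≤ B := h.hBinv i j
          _ ≤ (c2 + 1) * B ^ 1 := by nlinarith
      · -- Good q (c2+1) 2 (pd (Ginv · i j) m)
        have hIq : ∀ a b, Good p B q c 1 (fun x => Ginv x a b) := H B G Ginv p h
        have hpdG : ∀ a b, Good p B q A 0 (pd (fun x => G x a b) m) :=
          fun a b => Good.mono_r (by omega) (pdG_good h a b m)
        have inner : ∀ s : Fin n, Good p B q ((n:ℝ) * (2 ^ q * (c * A))) 1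
            (fun x => ∑ a, Ginv x i a * pd (fun y => G y a s) m x) := by
          intro s
          have hmul : ∀ a : Fin n, Good p B q (2 ^ q * (c * A)) 1
              (fun x => Ginv x i a * pd (fun y => G y a s) m x) := fun a =>
            ((Good.mul hB hc hA (hIq i a) (hpdG a s)).cast rfl (by omega))
          have := Good.sum (p := p) hB (by positivity) (s := Finset.univ)
            (F := fun a x => Ginv x i a * pd (fun y => G y a s) m x) (fun a _ => hmul a)
          simpa using this
        have outer : ∀ s : Fin n, Good p B q (2 ^ q * (((n:ℝ) * (2 ^ q * (c * A))) * c)) 2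
            (fun x => (-(∑ a, Ginv x i a * pd (fun y => G y a s) m x)) * Ginv x s j) := by
          intro s
          have := Good.mul hB (by positivity) hc ((inner s).neg) (hIq s j)
          exact this.cast rfl (by omega)
        have hsum := Good.sum (p := p) hB (by positivity) (s := Finset.univ)
          (F := fun s x => (-(∑ a, Ginv x i a * pd (fun y => G y a s) m x)) * Ginv x s j)
          (fun s _ => outer s)
        have hsum2 : Good p B q c2 2
            (fun x => ∑ s, (-(∑ a, Ginv x i a * pd (fun y => G y a s) m x)) * Ginv x s j) := by
          rw [hc2]
          simpa using hsum
        have := hsum2.mono_cd (c' := c2 + 1) hB hc2n (by linarith) le_rfl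
        exact this.congr fun x => (pd_Ginv h i j m x).symm

end S18


namespace S18

theorem christoffel_good (n k : ℕ) (A : ℝ) :
    ∃ c : ℝ, 0 ≤ c ∧ ∀ (B : ℝ) (G Ginv : (Fin n → ℝ) → Fin n → Fin n → ℝ) (p : Fin n → ℝ),
      Hyps n k A B G Ginv p →
      ∀ m i j, Good p B (k+1) c 1 (fun x => christoffel G Ginv x m i j) := by
  obtain ⟨c1, hc1, H1⟩ := Ginv_good n k A (k+1) le_rfl
  refine ⟨?c, ?pos, ?main⟩
  case main =>
    intro B G Ginv p h m i j
    have hB := h.hB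
    have hA : 0 ≤ A := h.A_nonneg i j
    have hpdG : ∀ a b m', Good p B (k+1) |A| 0 (pd (fun x => G x a b) m') := fun a b m' =>
      (pdG_good h a b m').mono_cd hB hA (le_abs_self A) le_rfl
    have hI : ∀ a b, Good p B (k+1) |c1| 1 (fun x => Ginv x a b) := fun a b =>
      (H1 B G Ginv p h a b).mono_cd hB hc1 (le_abs_self c1) le_rfl
    have t4 : ∀ kk : Fin n, Good p B (k+1) (2^(k+1) * (|c1| * (|A| + |A| + |A|))) 1
        (fun x => Ginv x m kk * (pd (fun y => G y kk i) j x + pd (fun y => G y kk j) i x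
          - pd (fun y => G y i j) kk x)) := by
      intro kk
      have t3 := ((hpdG kk i j).add (hpdG kk j i)).sub (hpdG i j kk)
      exact ((hI m kk).mul hB (by positivity) (by positivity) t3).cast rfl rfl
    have t5 := Good.sum (p := p) hB (by positivity) (s := Finset.univ)
      (F := fun kk x => Ginv x m kk * (pd (fun y => G y kk i) j x + pd (fun y => G y kk j) i x
          - pd (fun y => G y i j) kk x)) (fun kk _ => t4 kk)
    refine (Good.const_mul (1/2) t5).congr fun x => ?_
    simp [christoffel]
  case pos => positivity

theorem riemann_good (n k : ℕ) (A : ℝ) :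
    ∃ c : ℝ, 0 ≤ c ∧ ∀ (B : ℝ) (G Ginv : (Fin n → ℝ) → Fin n → Fin n → ℝ) (p : Fin n → ℝ),
      Hyps n k A B G Ginv p →
      ∀ l i j m, Good p B k c 2 (fun x => riemann G Ginv x l i j m) := by
  obtain ⟨cG, hcG, HG⟩ := christoffel_good n k A
  refine ⟨?c, ?pos, ?main⟩
  case main =>
    intro B G Ginv p h l i j m
    have hB := h.hB
    have hC : ∀ a b e, Good p B (k+1) |cG| 1 (fun x => christoffel G Ginv x a b e) := fun a b e =>
      (HG B G Ginv p h a b e).mono_cd hB hcG (le_abs_self cG) le_rfl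
    have pd1 : Good p B k |cG| 2 (pd (fun y => christoffel G Ginv y l i m) j) := (hC l i m).pd j
    have pd2 : Good p B k |cG| 2 (pd (fun y => christoffel G Ginv y l i j) m) := (hC l i j).pd m
    have q1 : ∀ s : Fin n, Good p B k (2^k * (|cG| * |cG|)) 2
        (fun x => christoffel G Ginv x l j s * christoffel G Ginv x s i m) := fun s =>
      (((hC l j s).mono_r (Nat.le_succ k)).mul hB (by positivity) (by positivity)
        ((hC s i m).mono_r (Nat.le_succ k))).cast rfl rfl
    have q2 : ∀ s : Fin n, Good p B k (2^k * (|cG| * |cG|)) 2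
        (fun x => christoffel G Ginv x l m s * christoffel G Ginv x s i j) := fun s =>
      (((hC l m s).mono_r (Nat.le_succ k)).mul hB (by positivity) (by positivity)
        ((hC s i j).mono_r (Nat.le_succ k))).cast rfl rfl
    have s1 := Good.sum (p := p) hB (by positivity) (s := Finset.univ)
      (F := fun s x => christoffel G Ginv x l j s * christoffel G Ginv x s i m)
      (fun s _ => q1 s)
    have s2 := Good.sum (p := p) hB (by positivity) (s := Finset.univ)
      (F := fun s x => christoffel G Ginv x l m s * christoffel G Ginv x s i j)
      (fun s _ => q2 s)
    refine (((pd1.sub pd2).add s1).sub s2).congr fun x => ?_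
    simp [riemann]
  case pos => positivity

theorem covR_good (n k : ℕ) (A : ℝ) :
    ∀ j, j ≤ k → ∃ c : ℝ, 0 ≤ c ∧
      ∀ (B : ℝ) (G Ginv : (Fin n → ℝ) → Fin n → Fin n → ℝ) (p : Fin n → ℝ),
        Hyps n k A B G Ginv p →
        ∀ (l : Fin n) (idx : Fin (3 + j) → Fin n),
          Good p B (k - j) c (2 + j) (fun x => covDerivIterR G Ginv j x l idx) := by
  intro j
  induction j with
  | zero =>
    intro _
    obtain ⟨c, hc, H⟩ := riemann_good n k A
    refine ⟨c, hc, fun B G Ginv p h l idx => ?_⟩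
    refine ((H B G Ginv p h l (idx 0) (idx 1) (idx 2)).cast rfl rfl).congr fun x => ?_
    simp [covDerivIterR]
  | succ j ih =>
    intro hj
    obtain ⟨cT, hcT, HT⟩ := ih (by omega)
    obtain ⟨cG, hcG, HG⟩ := christoffel_good n k A
    refine ⟨?c, ?pos, ?main⟩
    case main =>
      intro B G Ginv p h l idx
      have hB := h.hB
      have er : k - j = (k - (j+1)) + 1 := by omega
      set r := k - (j + 1) with hr
      have hT : ∀ (l' : Fin n) (idx' : Fin (3 + j) → Fin n),
          Good p B (r+1) |cT| (2 + j) (fun x => covDerivIterR G Ginv j x l' idx') := by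
        intro l' idx'
        have := (HT B G Ginv p h l' idx').mono_cd hB hcT (le_abs_self cT) le_rfl
        rwa [er] at this
      have hC : ∀ a b e, Good p B r |cG| 1 (fun x => christoffel G Ginv x a b e) := fun a b e =>
        ((HG B G Ginv p h a b e).mono_cd hB hcG (le_abs_self cG) le_rfl).mono_r (by omega)
      -- first term : pd of T
      have t1 : Good p B r |cT| (2 + j + 1)
          (pd (fun y => covDerivIterR G Ginv j y l (fun a => idx a.castSucc))
            (idx (Fin.last (3 + j)))) :=
        (hT l (fun a => idx a.castSucc)).pd _
      -- second term
      have t2 : ∀ s : Fin n, Good p B r (2^r * (|cG| * |cT|)) (2 + j + 1)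
          (fun x => christoffel G Ginv x l (idx (Fin.last (3 + j))) s *
            covDerivIterR G Ginv j x s (fun a => idx a.castSucc)) := fun s =>
        (((hC l (idx (Fin.last (3+j))) s).mul hB (by positivity) (by positivity)
          ((hT s (fun a => idx a.castSucc)).mono_r (Nat.le_succ r))).cast rfl (by omega))
      have s2 := Good.sum (p := p) hB (by positivity) (s := Finset.univ)
        (F := fun s x => christoffel G Ginv x l (idx (Fin.last (3 + j))) s *
          covDerivIterR G Ginv j x s (fun a => idx a.castSucc)) (fun s _ => t2 s)
      -- third term
      have t3 : ∀ a : Fin (3 + j), ∀ s : Fin n, Good p B r (2^r * (|cG| * |cT|)) (2 + j + 1)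
          (fun x => christoffel G Ginv x s (idx (Fin.last (3 + j))) (idx a.castSucc) *
            covDerivIterR G Ginv j x l (Function.update (fun b => idx b.castSucc) a s)) :=
        fun a s =>
        (((hC s (idx (Fin.last (3+j))) (idx a.castSucc)).mul hB (by positivity) (by positivity)
          ((hT l (Function.update (fun b => idx b.castSucc) a s)).mono_r (Nat.le_succ r))).cast
            rfl (by omega))
      have s3a : ∀ a : Fin (3 + j), Good p B r ((n:ℝ) * (2^r * (|cG| * |cT|))) (2 + j + 1)
          (fun x => ∑ s, christoffel G Ginv x s (idx (Fin.last (3 + j))) (idx a.castSucc) *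
            covDerivIterR G Ginv j x l (Function.update (fun b => idx b.castSucc) a s)) := by
        intro a
        have := Good.sum (p := p) hB (by positivity) (s := Finset.univ)
          (F := fun s x => christoffel G Ginv x s (idx (Fin.last (3 + j))) (idx a.castSucc) *
            covDerivIterR G Ginv j x l (Function.update (fun b => idx b.castSucc) a s))
          (fun s _ => t3 a s)
        simpa using this
      have s3 := Good.sum (p := p) hB (by positivity) (s := Finset.univ)
        (F := fun a x => ∑ s, christoffel G Ginv x s (idx (Fin.last (3 + j))) (idx a.castSucc) *
          covDerivIterR G Ginv j x l (Function.update (fun b => idx b.castSucc) a s))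
        (fun a _ => s3a a)
      have final := (t1.add s2).sub s3
      refine (final.cast rfl (show 2 + j + 1 = 2 + (j + 1) by omega)).congr fun x => ?_
      simp only [covDerivIterR, covDeriv]
      rfl
    case pos => positivity

end S18


/-- If all partial derivatives of the metric coefficients `G_{ij}` up to order `k+2` are
bounded by `A` at `p`, and the inverse matrix entries satisfy `|G^{ij}(p)| ≤ B` (`B ≥ 1`),
then `‖∇^k R(p)‖² ≤ C(k,A)·B^{6k+14}`, the norm taken with respect to `G` itself. -/
theorem stmt_18 (n k : ℕ) (A : ℝ) (hA : 0 < A) :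
    ∃ Ck : ℝ, 0 < Ck ∧
      ∀ B : ℝ, 1 ≤ B →
      ∀ (G Ginv : (Fin n → ℝ) → Fin n → Fin n → ℝ) (p : Fin n → ℝ),
        (∀ i j, ContDiff ℝ (⊤ : ℕ∞) (fun x => G x i j)) →
        (∀ i j, ContDiff ℝ (⊤ : ℕ∞) (fun x => Ginv x i j)) →
        (∀ x i j, (∑ s, Ginv x i s * G x s j) = if i = j then (1:ℝ) else 0) →
        (∀ x i j, (∑ s, G x i s * Ginv x s j) = if i = j then (1:ℝ) else 0) →
        (∀ q : ℕ, q ≤ k + 2 → ∀ i j,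
          ‖iteratedFDeriv ℝ q (fun x => G x i j) p‖ ≤ A) →
        (∀ i j, |Ginv p i j| ≤ B) →
        covNormSq G Ginv k p ≤ Ck * B ^ (6 * k + 14) := by
  obtain ⟨c, hc, H⟩ := S18.covR_good n k A k le_rfl
  set N : ℝ := (n:ℝ) * ((n:ℝ) * (((n:ℝ)^(3+k)) * ((n:ℝ)^(3+k)))) with hN
  refine ⟨N * (|c| * |c| * A) + 1, by positivity, ?_⟩
  intro B hB G Ginv p hG hGinv hleft hright hAbnd hBinv
  have h : S18.Hyps n k A B G Ginv p := ⟨hB, hG, hGinv, hleft, hright, hAbnd, hBinv⟩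
  have hB0 : (0:ℝ) ≤ B := le_trans zero_le_one hB
  have hT : ∀ (l : Fin n) (I : Fin (3+k) → Fin n),
      |covDerivIterR G Ginv k p l I| ≤ |c| * B ^ (2+k) := by
    intro l I
    have := ((H B G Ginv p h l I).mono_cd hB hc (le_abs_self c) le_rfl).bound
    simpa using this
  have hGp : ∀ l m : Fin n, |G p l m| ≤ A := by
    intro l m
    have := hAbnd 0 (by omega) l m
    rwa [norm_iteratedFDeriv_zero, Real.norm_eq_abs] at this
  have hprod : ∀ (I J : Fin (3+k) → Fin n),
      |∏ a, Ginv p (I a) (J a)| ≤ B ^ (3+k) := by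
    intro I J
    calc |∏ a, Ginv p (I a) (J a)| = ∏ a, |Ginv p (I a) (J a)| := Finset.abs_prod _ _
      _ ≤ ∏ _a : Fin (3+k), B := Finset.prod_le_prod (fun _ _ => abs_nonneg _)
          (fun a _ => hBinv _ _)
      _ = B ^ (3+k) := by simp
  have key : ∀ (l m : Fin n) (I J : Fin (3+k) → Fin n),
      covDerivIterR G Ginv k p l I * covDerivIterR G Ginv k p m J *
        (∏ a, Ginv p (I a) (J a)) * G p l m ≤ (|c| * |c| * A) * B ^ (3*k+7) := by
    intro l m I J
    calc covDerivIterR G Ginv k p l I * covDerivIterR G Ginv k p m J *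
          (∏ a, Ginv p (I a) (J a)) * G p l m
        ≤ |covDerivIterR G Ginv k p l I * covDerivIterR G Ginv k p m J *
          (∏ a, Ginv p (I a) (J a)) * G p l m| := le_abs_self _
      _ = |covDerivIterR G Ginv k p l I| * |covDerivIterR G Ginv k p m J| *
          |∏ a, Ginv p (I a) (J a)| * |G p l m| := by rw [abs_mul, abs_mul, abs_mul]
      _ ≤ (|c| * B ^ (2+k)) * (|c| * B ^ (2+k)) * (B ^ (3+k)) * A := by
          have m1 := mul_le_mul (hT l I) (hT m J) (abs_nonneg _) (by positivity)
          have m2 := mul_le_mul m1 (hprod I J) (abs_nonneg _) (by positivity)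
          exact mul_le_mul m2 (hGp l m) (abs_nonneg _) (by positivity)
      _ = (|c| * |c| * A) * B ^ (3*k+7) := by
          rw [show 3*k+7 = (2+k) + (2+k) + (3+k) by omega, pow_add, pow_add]; ring
  have hsum : covNormSq G Ginv k p ≤
      ((n:ℝ) * ((n:ℝ) * (((n:ℝ)^(3+k)) * (((n:ℝ)^(3+k)) *
        ((|c| * |c| * A) * B ^ (3*k+7)))))) := by
    rw [covNormSq]
    have step : ∀ l : Fin n, ∀ m : Fin n,
        ∑ I : Fin (3+k) → Fin n, ∑ J : Fin (3+k) → Fin n,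
          covDerivIterR G Ginv k p l I * covDerivIterR G Ginv k p m J *
            (∏ a, Ginv p (I a) (J a)) * G p l m
        ≤ ((n:ℝ)^(3+k)) * (((n:ℝ)^(3+k)) * ((|c| * |c| * A) * B ^ (3*k+7))) := by
      intro l m
      calc ∑ I : Fin (3+k) → Fin n, ∑ J : Fin (3+k) → Fin n,
            covDerivIterR G Ginv k p l I * covDerivIterR G Ginv k p m J *
              (∏ a, Ginv p (I a) (J a)) * G p l m
          ≤ ∑ _I : Fin (3+k) → Fin n, ∑ _J : Fin (3+k) → Fin n,
              (|c| * |c| * A) * B ^ (3*k+7) :=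
            Finset.sum_le_sum fun I _ => Finset.sum_le_sum fun J _ => key l m I J
        _ = ((n:ℝ)^(3+k)) * (((n:ℝ)^(3+k)) * ((|c| * |c| * A) * B ^ (3*k+7))) := by
            simp [Finset.sum_const, Finset.card_univ, mul_assoc]
    calc ∑ l, ∑ m, ∑ I : Fin (3 + k) → Fin n, ∑ J : Fin (3 + k) → Fin n,
          covDerivIterR G Ginv k p l I * covDerivIterR G Ginv k p m J *
            (∏ a, Ginv p (I a) (J a)) * G p l m
        ≤ ∑ _l : Fin n, ∑ _m : Fin n,
            ((n:ℝ)^(3+k)) * (((n:ℝ)^(3+k)) * ((|c| * |c| * A) * B ^ (3*k+7))) :=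
          Finset.sum_le_sum fun l _ => Finset.sum_le_sum fun m _ => step l m
      _ = (n:ℝ) * ((n:ℝ) * (((n:ℝ)^(3+k)) * (((n:ℝ)^(3+k)) *
            ((|c| * |c| * A) * B ^ (3*k+7))))) := by
          simp [Finset.sum_const, Finset.card_univ, mul_assoc]
  have hpow : B ^ (3*k+7) ≤ B ^ (6*k+14) := pow_le_pow_right₀ hB (by omega)
  calc covNormSq G Ginv k p
      ≤ N * ((|c| * |c| * A) * B ^ (3*k+7)) := by rw [hN]; linarith [hsum]
    _ = (N * (|c| * |c| * A)) * B ^ (3*k+7) := by ring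
    _ ≤ (N * (|c| * |c| * A)) * B ^ (6*k+14) := by
        have : (0:ℝ) ≤ N * (|c| * |c| * A) := by positivity
        exact mul_le_mul_of_nonneg_left hpow this
    _ ≤ (N * (|c| * |c| * A) + 1) * B ^ (6*k+14) := by
        have : (0:ℝ) ≤ B ^ (6*k+14) := pow_nonneg hB0 _
        nlinarith
end
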